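/- arXiv:1605.04585 — 4 statements merged into one kernel-verified Lean document; each statement's English description precedes it below -/
import Mathlib

section
/- Let T be a fixed tree on at least 2 vertices and let θ = odd(T) (so θ ≥ 2). Let Γ_{t(n)} be the trace of a lazy simple random walk of length t(n) on the complete graph K_n. If t(n)/n^{1-2/θ} → 0 as n → ∞, then the probability that Γ_{t(n)} contains a copy of T tends to 0 as n → ∞. -/
open Filter
open scoped Classical

noncomputable section

/-- Transition probability of the lazy simple random walk on `G`: from `u`, move to a
vertex chosen uniformly from `{u} ∪ N(u)`. -/
def stepProb {n : ℕ} (G : SimpleGraph (Fin n)) (u v : Fin n) : ℝ :=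
  if v = u ∨ G.Adj u v then 1 / ((G.neighborSet u).ncard + 1) else 0

/-- Probability that the lazy simple random walk of length `t` on `G`, started uniformly,
follows the vertex sequence `w`. -/
def walkProb {n : ℕ} (G : SimpleGraph (Fin n)) (t : ℕ) (w : Fin (t + 1) → Fin n) : ℝ :=
  (1 / (n : ℝ)) * ∏ i : Fin t, stepProb G (w i.castSucc) (w i.succ)

/-- Probability of an event for the lazy simple random walk of length `t` on `G`. -/
def walkPr {n : ℕ} (G : SimpleGraph (Fin n)) (t : ℕ)
    (E : (Fin (t + 1) → Fin n) → Prop) : ℝ :=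
  ∑ w : Fin (t + 1) → Fin n, if E w then walkProb G t w else 0

/-- Expectation of a function of the lazy simple random walk of length `t` on `G`. -/
def walkExp {n : ℕ} (G : SimpleGraph (Fin n)) (t : ℕ)
    (f : (Fin (t + 1) → Fin n) → ℝ) : ℝ :=
  ∑ w : Fin (t + 1) → Fin n, walkProb G t w * f w

/-- The trace of the walk `w`: the graph whose edges are the non-loop steps of `w`. -/
def traceGraph {n t : ℕ} (w : Fin (t + 1) → Fin n) : SimpleGraph (Fin n) :=
  SimpleGraph.fromRel (fun u v => ∃ i : Fin t, w i.castSucc = u ∧ w i.succ = v)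

/-- `Γ` contains a copy of `H`. -/
def containsCopy {α β : Type*} (H : SimpleGraph α) (Γ : SimpleGraph β) : Prop :=
  ∃ φ : α → β, Function.Injective φ ∧ ∀ a b, H.Adj a b → Γ.Adj (φ a) (φ b)

/-- The probability that `G(n,p)` equals a given graph `G`. -/
def gnpProb (n : ℕ) (p : ℝ) (G : SimpleGraph (Fin n)) : ℝ :=
  p ^ G.edgeSet.ncard * (1 - p) ^ (n.choose 2 - G.edgeSet.ncard)

/-- The probability that `G(n,p)` satisfies the predicate `P`. -/
def gnpPr (n : ℕ) (p : ℝ) (P : SimpleGraph (Fin n) → Prop) : ℝ :=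
  ∑ G : SimpleGraph (Fin n), if P G then gnpProb n p G else 0

/-- The joint probability, over `G ∼ G(n,p)` and a lazy simple random walk of length `t`
on `G`, of the event `E`. -/
def gnpWalkPr (n : ℕ) (p : ℝ) (t : ℕ)
    (E : SimpleGraph (Fin n) → (Fin (t + 1) → Fin n) → Prop) : ℝ :=
  ∑ G : SimpleGraph (Fin n), gnpProb n p G * walkPr G t (E G)

/-- `m₀(H)`: the maximum edge density over nonempty subgraphs of `H`. -/
def maxDensity {α : Type*} [Fintype α] (H : SimpleGraph α) : ℝ :=
  sSup {q : ℝ | ∃ s : Set α, s.Nonempty ∧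
    q = ({e ∈ H.edgeSet | ∀ v ∈ e, v ∈ s}.ncard : ℝ) / (s.ncard : ℝ)}

/-- The number of odd-degree vertices of `G`. -/
def oddCount {α : Type*} [Fintype α] (G : SimpleGraph α) : ℕ :=
  {v : α | Odd ((G.neighborSet v).ncard)}.ncard

/-- The trail decomposition number `ρ(G)`: the minimum number of pairwise edge-disjoint
trails whose union of edge sets is the edge set of `G`. -/
def trailDecompNumber {α : Type*} (G : SimpleGraph α) : ℕ :=
  sInf {r : ℕ | ∃ L : List (Σ u : α, Σ v : α, G.Walk u v),
    L.length = r ∧ (∀ P ∈ L, P.2.2.IsTrail) ∧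
    L.Pairwise (fun P Q => ∀ e ∈ P.2.2.edges, e ∉ Q.2.2.edges) ∧
    ∀ e, e ∈ G.edgeSet ↔ ∃ P ∈ L, e ∈ P.2.2.edges}

/-- The number of subgraphs of `Γ` isomorphic to `H`. -/
def copyCount {α β : Type*} (H : SimpleGraph α) (Γ : SimpleGraph β) : ℕ :=
  {K : Γ.Subgraph | Nonempty (H ≃g K.coe)}.ncard

end


section AuxProofs
open Finset

lemma stepProb_top {n : ℕ} (hn : 0 < n) (u v : Fin n) :
    stepProb (⊤ : SimpleGraph (Fin n)) u v = 1 / n := by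
  have hns : ((⊤ : SimpleGraph (Fin n)).neighborSet u).ncard = n - 1 := by
    have : (⊤ : SimpleGraph (Fin n)).neighborSet u = {u}ᶜ := by
      ext v; simp [SimpleGraph.neighborSet, SimpleGraph.top_adj, ne_comm]
    rw [this, Set.ncard_eq_toFinset_card']
    simp [Finset.card_compl]
  have hcond : v = u ∨ (⊤ : SimpleGraph (Fin n)).Adj u v := by
    by_cases h : v = u
    · exact Or.inl h
    · exact Or.inr (by simp [SimpleGraph.top_adj]; exact fun h' => h h'.symm)
  rw [stepProb, if_pos hcond, hns]
  have : ((n - 1 : ℕ) : ℝ) + 1 = n := by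
    push_cast [Nat.cast_sub hn]
    ring
  rw [this]

lemma walkProb_top {n t : ℕ} (hn : 0 < n) (w : Fin (t + 1) → Fin n) :
    walkProb (⊤ : SimpleGraph (Fin n)) t w = (1 / n) ^ (t + 1) := by
  rw [walkProb]
  simp only [stepProb_top hn]
  rw [Finset.prod_const]
  simp [pow_succ]
  ring

lemma walkPr_top {n t : ℕ} (hn : 0 < n) (E : (Fin (t + 1) → Fin n) → Prop) :
    walkPr (⊤ : SimpleGraph (Fin n)) t E
      = ((univ.filter E).card : ℝ) * (1 / n) ^ (t + 1) := by
  rw [walkPr]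
  rw [Finset.sum_ite, Finset.sum_const_zero, add_zero, Finset.sum_congr rfl
    (fun w _ => walkProb_top hn w), Finset.sum_const]
  simp [mul_comm]

namespace TraceAux

/-- positions covered by steps -/
def PP {t : ℕ} (S₀ : Finset (Fin t)) : Finset (Fin (t + 1)) :=
  S₀.image Fin.castSucc ∪ S₀.image Fin.succ

/-- left endpoints of runs, in ℕ -/
def lft (N : Finset ℕ) : Finset ℕ := N.filter (fun x => ¬∃ y ∈ N, y + 1 = x)

lemma exists_not_mem (N : Finset ℕ) (x : ℕ) : ∃ d, x + d ∉ N := by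
  refine ⟨N.sup id + 1, fun h => ?_⟩
  have := Finset.le_sup (f := id) h
  simp only [id] at this
  omega

/-- length of the run starting at x -/
noncomputable def len (N : Finset ℕ) (x : ℕ) : ℕ := Nat.find (exists_not_mem N x)

lemma len_pos {N : Finset ℕ} {x : ℕ} (hx : x ∈ N) : 0 < len N x := by
  rcases Nat.eq_zero_or_pos (len N x) with h | h
  · have := Nat.find_spec (exists_not_mem N x)
    rw [len] at h; rw [h] at this; simp at this; exact absurd hx this
  · exact h

lemma mem_of_lt_len {N : Finset ℕ} {x e : ℕ} (he : e < len N x) : x + e ∈ N := by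
  by_contra h
  have h2 : Nat.find (exists_not_mem N x) ≤ e := Nat.find_le h
  rw [len] at he
  omega

lemma not_mem_add_len (N : Finset ℕ) (x : ℕ) : x + len N x ∉ N :=
  Nat.find_spec (exists_not_mem N x)

lemma len_le_card {N : Finset ℕ} {x : ℕ} (hx : x ∈ N) : len N x ≤ N.card := by
  have h : ∀ e ∈ Finset.range (len N x), x + e ∈ N := fun e he =>
    mem_of_lt_len (Finset.mem_range.mp he)
  have := Finset.card_le_card_of_injOn (fun e => x + e) h (fun a _ b _ hab => by simpa using hab)
  simpa using this

lemma mem_iff_interval {N : Finset ℕ} {s : ℕ} :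
    s ∈ N ↔ ∃ x ∈ lft N, x ≤ s ∧ s < x + len N x := by
  constructor
  · intro hs
    induction s using Nat.strong_induction_on with
    | _ s ih =>
      by_cases h : ∃ y ∈ N, y + 1 = s
      · obtain ⟨y, hy, rfl⟩ := h
        obtain ⟨x, hxl, hxy, hylt⟩ := ih y (by omega) hy
        refine ⟨x, hxl, by omega, ?_⟩
        rcases Nat.lt_or_ge (y + 1) (x + len N x) with h' | h'
        · exact h'
        · have heq : y + 1 = x + len N x := by omega
          exact absurd (heq ▸ hs) (not_mem_add_len N x)
      · exact ⟨s, Finset.mem_filter.mpr ⟨hs, h⟩, le_refl s,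
          by have := len_pos hs; omega⟩
  · rintro ⟨x, hxl, hxs, hlt⟩
    have : s = x + (s - x) := by omega
    rw [this]
    exact mem_of_lt_len (by omega)

lemma lft_subset (N : Finset ℕ) : lft N ⊆ N := Finset.filter_subset _ _

/-- Encoding of a finset of naturals by its run starts and run lengths. -/
noncomputable def enc (N : Finset ℕ) : Finset (ℕ × ℕ) :=
  (lft N).image (fun x => (x, len N x - 1))

lemma enc_card (N : Finset ℕ) : (enc N).card = (lft N).card :=
  Finset.card_image_of_injOn (fun a _ b _ hab => congrArg Prod.fst hab)

lemma enc_injective : Function.Injective enc := by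
  intro N N' h
  ext s
  have key : ∀ M : Finset ℕ, s ∈ M ↔ ∃ p ∈ enc M, p.1 ≤ s ∧ s ≤ p.1 + p.2 := by
    intro M
    rw [mem_iff_interval]
    constructor
    · rintro ⟨x, hx, h1, h2⟩
      exact ⟨(x, len M x - 1), Finset.mem_image_of_mem _ hx,
        h1, by have := len_pos (lft_subset M hx); omega⟩
    · rintro ⟨p, hp, h1, h2⟩
      obtain ⟨x, hx, rfl⟩ := Finset.mem_image.mp hp
      exact ⟨x, hx, h1, by have := len_pos (lft_subset M hx); simp at h2 ⊢; omega⟩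
  rw [key N, key N', h]

end TraceAux

namespace TraceAux
open Finset

def NN {t : ℕ} (S₀ : Finset (Fin t)) : Finset ℕ := S₀.image Fin.val

lemma card_NN {t : ℕ} (S₀ : Finset (Fin t)) : (NN S₀).card = S₀.card :=
  Finset.card_image_of_injective _ Fin.val_injective

lemma card_lft {t : ℕ} (S₀ : Finset (Fin t)) :
    ((S₀.image Fin.castSucc) \ (S₀.image Fin.succ)).card = (lft (NN S₀)).card := by
  apply Finset.card_bij (fun i _ => (i : Fin (t+1)).val)
  · intro i hi
    rw [Finset.mem_sdiff] at hi
    obtain ⟨s, hs, rfl⟩ := Finset.mem_image.mp hi.1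
    refine Finset.mem_filter.mpr ⟨Finset.mem_image.mpr ⟨s, hs, by simp⟩, ?_⟩
    rintro ⟨y, hy, hy1⟩
    obtain ⟨s', hs', rfl⟩ := Finset.mem_image.mp hy
    refine hi.2 (Finset.mem_image.mpr ⟨s', hs', ?_⟩)
    apply Fin.ext
    simp only [Fin.val_succ, Fin.coe_castSucc] at hy1 ⊢
    omega
  · intro a ha b hb hab
    exact Fin.val_injective hab
  · intro x hx
    rw [lft, Finset.mem_filter] at hx
    obtain ⟨s, hs, rfl⟩ := Finset.mem_image.mp hx.1
    refine ⟨Fin.castSucc s, Finset.mem_sdiff.mpr ⟨Finset.mem_image.mpr ⟨s, hs, rfl⟩, ?_⟩, by simp⟩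
    intro hmem
    obtain ⟨s', hs', heq⟩ := Finset.mem_image.mp hmem
    exact hx.2 ⟨s'.val, Finset.mem_image.mpr ⟨s', hs', rfl⟩, by
      have := congrArg Fin.val heq; simpa using this⟩

lemma card_lft_add {t : ℕ} (S₀ : Finset (Fin t)) :
    (lft (NN S₀)).card + S₀.card = (PP S₀).card := by
  have h1 : (S₀.image Fin.succ).card = S₀.card :=
    Finset.card_image_of_injective _ (Fin.succ_injective _)
  have h2 := Finset.card_sdiff_add_card (S₀.image Fin.castSucc) (S₀.image Fin.succ)
  have h3 := card_lft S₀
  rw [PP]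
  omega

lemma card_fiber_le (t m r : ℕ) :
    ((Finset.univ : Finset (Finset (Fin t))).filter fun S₀ =>
        S₀.card = m ∧ (PP S₀).card = m + r).card ≤ ((t + 1) * m) ^ r := by
  have hmaps : ∀ S₀ ∈ (Finset.univ : Finset (Finset (Fin t))).filter
      (fun S₀ => S₀.card = m ∧ (PP S₀).card = m + r),
      enc (NN S₀) ∈ Finset.powersetCard r (Finset.range (t+1) ×ˢ Finset.range m) := by
    intro S₀ hS₀
    rw [Finset.mem_filter] at hS₀
    obtain ⟨-, hm, hp⟩ := hS₀
    have hlft : (lft (NN S₀)).card = r := by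
      have := card_lft_add S₀; omega
    rw [Finset.mem_powersetCard]
    constructor
    · intro p hp'
      rw [enc, Finset.mem_image] at hp'
      obtain ⟨x, hx, rfl⟩ := hp'
      have hxN : x ∈ NN S₀ := lft_subset _ hx
      have hlen1 : 0 < len (NN S₀) x := len_pos hxN
      have hlen2 : len (NN S₀) x ≤ m := by
        have := len_le_card hxN; rw [card_NN, hm] at this; exact this
      obtain ⟨s, _, rfl⟩ := Finset.mem_image.mp hxN
      rw [Finset.mem_product]
      exact ⟨Finset.mem_range.mpr (by omega), Finset.mem_range.mpr (by omega)⟩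
    · rw [enc_card, hlft]
  have hinj : ∀ S₀ ∈ (Finset.univ : Finset (Finset (Fin t))).filter
      (fun S₀ => S₀.card = m ∧ (PP S₀).card = m + r), ∀ S₁ ∈ (Finset.univ : Finset (Finset (Fin t))).filter
      (fun S₀ => S₀.card = m ∧ (PP S₀).card = m + r),
      enc (NN S₀) = enc (NN S₁) → S₀ = S₁ := by
    intro S₀ _ S₁ _ h
    have hN := enc_injective h
    ext s
    constructor
    · intro hs
      have : (s : ℕ) ∈ NN S₁ := by rw [← hN]; exact Finset.mem_image_of_mem _ hs
      obtain ⟨s', hs', heq⟩ := Finset.mem_image.mp this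
      rwa [← Fin.val_injective heq]
    · intro hs
      have : (s : ℕ) ∈ NN S₀ := by rw [hN]; exact Finset.mem_image_of_mem _ hs
      obtain ⟨s', hs', heq⟩ := Finset.mem_image.mp this
      rwa [← Fin.val_injective heq]
  calc ((Finset.univ : Finset (Finset (Fin t))).filter fun S₀ =>
        S₀.card = m ∧ (PP S₀).card = m + r).card
      ≤ (Finset.powersetCard r (Finset.range (t+1) ×ˢ Finset.range m)).card :=
        Finset.card_le_card_of_injOn _ hmaps hinj
    _ = ((t+1) * m).choose r := by
        rw [Finset.card_powersetCard, Finset.card_product, Finset.card_range, Finset.card_range]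
    _ ≤ ((t+1) * m) ^ r := Nat.choose_le_pow _ _

end TraceAux

lemma card_fixed_on {β γ : Type*} [Fintype β] [Fintype γ]
    (P : Finset β) (g : ↥P → γ) :
    ((Finset.univ : Finset (β → γ)).filter fun w => ∀ i : ↥P, w i = g i).card
      = Fintype.card γ ^ (Fintype.card β - P.card) := by
  classical
  have himg : ((Finset.univ : Finset (β → γ)).filter fun w => ∀ i : ↥P, w i = g i)
      = (Finset.univ : Finset (↥(Pᶜ) → γ)).image
          (fun f i => if h : i ∈ P then g ⟨i, h⟩ else f ⟨i, by simpa using h⟩) := by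
    ext w
    simp only [Finset.mem_filter, Finset.mem_univ, true_and, Finset.mem_image]
    constructor
    · intro hw
      refine ⟨fun j => w j, ?_⟩
      funext i
      by_cases h : i ∈ P
      · rw [dif_pos h]; exact (hw ⟨i, h⟩).symm
      · rw [dif_neg h]
    · rintro ⟨f, rfl⟩ i
      exact dif_pos i.2
  rw [himg, Finset.card_image_of_injective _ ?_, Finset.card_univ, Fintype.card_fun]
  · congr 1
    · rw [Fintype.card_coe, Finset.card_compl]
  · intro f f' hff
    funext i
    have := congrFun hff i.1
    have hiP : i.1 ∉ P := Finset.mem_compl.mp i.2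
    simp only [dif_neg hiP] at this
    convert this <;> simp

set_option maxHeartbeats 1000000 in
lemma extract {α : Type} [Fintype α] (T : SimpleGraph α) {n t : ℕ}
    (w : Fin (t + 1) → Fin n) (hw : containsCopy T (traceGraph w)) :
    ∃ S₀ : Finset (Fin t), S₀.card = T.edgeFinset.card ∧
      (Finset.univ.filter fun a : α => Odd (T.degree a)).card
        ≤ 2 * ((TraceAux.PP S₀).card - S₀.card) ∧ S₀.card ≤ (TraceAux.PP S₀).card ∧
      ∃ (c : ↥(TraceAux.PP S₀) → α) (φ : α → Fin n),
        ∀ i : ↥(TraceAux.PP S₀), w i.1 = φ (c i) := by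
  classical
  obtain ⟨φ, hφinj, hφadj⟩ := hw
  have hstep : ∀ e ∈ T.edgeFinset, ∃ i : Fin t,
      Sym2.map φ e = s(w i.castSucc, w i.succ) ∧ w i.castSucc ≠ w i.succ := by
    intro e
    refine Sym2.inductionOn e ?_
    intro a b he
    have hadj : T.Adj a b := by rwa [SimpleGraph.mem_edgeFinset, SimpleGraph.mem_edgeSet] at he
    have htr := hφadj a b hadj
    rw [traceGraph, SimpleGraph.fromRel_adj] at htr
    obtain ⟨hne, hor⟩ := htr
    rcases hor with ⟨i, h1, h2⟩ | ⟨i, h1, h2⟩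
    · exact ⟨i, by rw [Sym2.map_pair_eq, h1, h2], by rw [h1, h2]; exact hne⟩
    · refine ⟨i, ?_, by rw [h1, h2]; exact hne.symm⟩
      rw [Sym2.map_pair_eq, h1, h2]
      exact Sym2.eq_swap
  set F : ↥T.edgeFinset → Fin t := fun e => (hstep e.1 e.2).choose with hFdef
  have hF : ∀ e : ↥T.edgeFinset, Sym2.map φ e.1 = s(w (F e).castSucc, w (F e).succ)
      ∧ w (F e).castSucc ≠ w (F e).succ := fun e => (hstep e.1 e.2).choose_spec
  have hFinj : Function.Injective F := by
    intro e e' h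
    apply Subtype.ext
    apply Sym2.map.injective hφinj
    rw [(hF e).1, (hF e').1, h]
  set S₀ : Finset (Fin t) := Finset.univ.image F with hS₀def
  have hScard : S₀.card = T.edgeFinset.card := by
    rw [hS₀def, Finset.card_image_of_injective _ hFinj, Finset.card_univ, Fintype.card_coe]
  set I₁ : Finset (Fin (t+1)) := S₀.image Fin.castSucc with hI₁def
  set I₂ : Finset (Fin (t+1)) := S₀.image Fin.succ with hI₂def
  set J : Finset (Fin (t+1)) := (I₁ \ I₂) ∪ (I₂ \ I₁) with hJdef
  have hne : ∀ s ∈ S₀, w s.castSucc ≠ w s.succ := by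
    intro s hs
    obtain ⟨e, -, rfl⟩ := Finset.mem_image.mp hs
    exact (hF e).2
  -- degree identity
  have hdeg : ∀ a : α,
      (S₀.filter fun s => w s.castSucc = φ a ∨ w s.succ = φ a).card = T.degree a := by
    intro a
    rw [hS₀def, Finset.filter_image, Finset.card_image_of_injective _ hFinj]
    have hcond : ∀ e : ↥T.edgeFinset,
        (w (F e).castSucc = φ a ∨ w (F e).succ = φ a) ↔ a ∈ e.1 := by
      intro e
      constructor
      · intro h
        have hmem : φ a ∈ Sym2.map φ e.1 := by
          rw [(hF e).1]
          rcases h with h | h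
          · rw [← h]; exact Sym2.mem_mk_left _ _
          · rw [← h]; exact Sym2.mem_mk_right _ _
        obtain ⟨a', ha', heq⟩ := Sym2.mem_map.mp hmem
        rwa [← hφinj heq]
      · intro h
        have hmem : φ a ∈ Sym2.map φ e.1 := Sym2.mem_map.mpr ⟨a, h, rfl⟩
        rw [(hF e).1, Sym2.mem_iff] at hmem
        tauto
    rw [Finset.filter_congr (fun e _ => by rw [hcond e])]
    rw [← SimpleGraph.card_incidenceFinset_eq_degree]
    apply Finset.card_bij (fun (e : ↥T.edgeFinset) _ => (e : Sym2 α))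
    · intro e he
      rw [Finset.mem_filter] at he
      rw [SimpleGraph.mem_incidenceFinset]
      exact ⟨SimpleGraph.mem_edgeFinset.mp e.2, he.2⟩
    · intro e _ e' _ h
      exact Subtype.ext h
    · intro e he
      rw [SimpleGraph.mem_incidenceFinset] at he
      exact ⟨⟨e, SimpleGraph.mem_edgeFinset.mpr he.1⟩,
        Finset.mem_filter.mpr ⟨Finset.mem_univ _, he.2⟩, rfl⟩
  -- parity identity
  have hkey : ∀ v : Fin n,
      (S₀.filter fun s => w s.castSucc = v ∨ w s.succ = v).card
      = 2 * (((I₁ ∩ I₂)).filter fun i => w i = v).card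
        + (J.filter fun i => w i = v).card := by
    intro v
    have hsplit : (S₀.filter fun s => w s.castSucc = v ∨ w s.succ = v)
        = S₀.filter (fun s => w s.castSucc = v) ∪ S₀.filter (fun s => w s.succ = v) :=
      Finset.filter_or _ _ _
    have hdisj : Disjoint (S₀.filter (fun s => w s.castSucc = v))
        (S₀.filter (fun s => w s.succ = v)) := by
      rw [Finset.disjoint_left]
      intro s h1 h2
      rw [Finset.mem_filter] at h1 h2
      exact hne s h1.1 (h1.2.trans h2.2.symm)
    have e1 : (S₀.filter (fun s => w s.castSucc = v)).card
        = (I₁.filter (fun i => w i = v)).card := by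
      conv_rhs => rw [hI₁def, Finset.filter_image]
      rw [Finset.card_image_of_injective _ (Fin.castSucc_injective t)]
    have e2 : (S₀.filter (fun s => w s.succ = v)).card
        = (I₂.filter (fun i => w i = v)).card := by
      conv_rhs => rw [hI₂def, Finset.filter_image]
      rw [Finset.card_image_of_injective _ (Fin.succ_injective t)]
    have hsd1 : (I₁.filter (fun i => w i = v)) \ I₂ = (I₁ \ I₂).filter (fun i => w i = v) := by
      ext i; simp only [Finset.mem_sdiff, Finset.mem_filter]; tauto
    have hin1 : (I₁.filter (fun i => w i = v)) ∩ I₂ = (I₁ ∩ I₂).filter (fun i => w i = v) := by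
      ext i; simp only [Finset.mem_inter, Finset.mem_filter]; tauto
    have hsd2 : (I₂.filter (fun i => w i = v)) \ I₁ = (I₂ \ I₁).filter (fun i => w i = v) := by
      ext i; simp only [Finset.mem_sdiff, Finset.mem_filter]; tauto
    have hin2 : (I₂.filter (fun i => w i = v)) ∩ I₁ = (I₁ ∩ I₂).filter (fun i => w i = v) := by
      ext i; simp only [Finset.mem_inter, Finset.mem_filter]; tauto
    have s1 : ((I₁ \ I₂).filter (fun i => w i = v)).card
          + ((I₁ ∩ I₂).filter (fun i => w i = v)).card
        = (I₁.filter (fun i => w i = v)).card := by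
      rw [← hsd1, ← hin1]
      exact Finset.card_sdiff_add_card_inter _ _
    have s2 : ((I₂ \ I₁).filter (fun i => w i = v)).card
          + ((I₁ ∩ I₂).filter (fun i => w i = v)).card
        = (I₂.filter (fun i => w i = v)).card := by
      rw [← hsd2, ← hin2]
      exact Finset.card_sdiff_add_card_inter _ _
    have s3 : (J.filter (fun i => w i = v)).card
        = ((I₁ \ I₂).filter (fun i => w i = v)).card
          + ((I₂ \ I₁).filter (fun i => w i = v)).card := by
      rw [hJdef, Finset.filter_union, Finset.card_union_of_disjoint]
      apply Finset.disjoint_filter_filter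
      rw [Finset.disjoint_left]
      intro i h1 h2
      rw [Finset.mem_sdiff] at h1 h2
      exact h2.2 h1.1
    rw [hsplit, Finset.card_union_of_disjoint hdisj, e1, e2]
    omega
  -- odd vertices map into J
  have hodd : ∀ a : α, Odd (T.degree a) → ∃ i ∈ J, w i = φ a := by
    intro a ha
    have h1 := hdeg a
    have h2 := hkey (φ a)
    have hoddJ : Odd ((J.filter fun i => w i = φ a).card) := by
      rw [h1] at h2
      rcases ha with ⟨j, hj⟩
      exact ⟨j - (((I₁ ∩ I₂)).filter fun i => w i = φ a).card, by omega⟩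
    have hpos : 0 < (J.filter fun i => w i = φ a).card := by
      rcases hoddJ with ⟨j, hj⟩; omega
    obtain ⟨i, hi⟩ := Finset.card_pos.mp hpos
    rw [Finset.mem_filter] at hi
    exact ⟨i, hi.1, hi.2⟩
  -- counting J
  have hcard1 : (I₁ \ I₂).card + I₂.card = (TraceAux.PP S₀).card :=
    Finset.card_sdiff_add_card I₁ I₂
  have hcard2 : (I₂ \ I₁).card + I₁.card = (TraceAux.PP S₀).card := by
    rw [TraceAux.PP, Finset.union_comm]
    exact Finset.card_sdiff_add_card I₂ I₁
  have hI₁card : I₁.card = S₀.card := Finset.card_image_of_injective _ (Fin.castSucc_injective t)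
  have hI₂card : I₂.card = S₀.card := Finset.card_image_of_injective _ (Fin.succ_injective t)
  have hJcard : J.card = (I₁ \ I₂).card + (I₂ \ I₁).card := by
    rw [hJdef, Finset.card_union_of_disjoint]
    rw [Finset.disjoint_left]
    intro i h1 h2
    rw [Finset.mem_sdiff] at h1 h2
    exact h2.2 h1.1
  have hPScard : S₀.card ≤ (TraceAux.PP S₀).card := by omega
  have hinj2 : (Finset.univ.filter fun a : α => Odd (T.degree a)).card ≤ J.card := by
    have h0 : (0 : Fin (t+1)) = 0 := rfl
    apply Finset.card_le_card_of_injOn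
      (fun a => if ha : Odd (T.degree a) then (hodd a ha).choose else (0 : Fin (t+1)))
    · intro a ha
      rw [Finset.mem_coe, Finset.mem_filter] at ha
      simp only [Finset.mem_coe]
      rw [dif_pos ha.2]
      exact (hodd a ha.2).choose_spec.1
    · intro a ha b hb hab
      rw [Finset.mem_coe, Finset.mem_filter] at ha hb
      simp only [dif_pos ha.2, dif_pos hb.2] at hab
      apply hφinj
      rw [← (hodd a ha.2).choose_spec.2, ← (hodd b hb.2).choose_spec.2, hab]
  -- values on covered positions
  have hval : ∀ i : Fin (t+1), i ∈ TraceAux.PP S₀ → ∃ a : α, w i = φ a := by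
    intro i hi
    rw [TraceAux.PP, Finset.mem_union] at hi
    rcases hi with hi | hi
    · obtain ⟨s, hs, rfl⟩ := Finset.mem_image.mp hi
      obtain ⟨e, -, rfl⟩ := Finset.mem_image.mp hs
      have hmem : w (F e).castSucc ∈ Sym2.map φ e.1 := by
        rw [(hF e).1]; exact Sym2.mem_mk_left _ _
      obtain ⟨a, -, ha⟩ := Sym2.mem_map.mp hmem
      exact ⟨a, ha.symm⟩
    · obtain ⟨s, hs, rfl⟩ := Finset.mem_image.mp hi
      obtain ⟨e, -, rfl⟩ := Finset.mem_image.mp hs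
      have hmem : w (F e).succ ∈ Sym2.map φ e.1 := by
        rw [(hF e).1]; exact Sym2.mem_mk_right _ _
      obtain ⟨a, -, ha⟩ := Sym2.mem_map.mp hmem
      exact ⟨a, ha.symm⟩
  refine ⟨S₀, hScard, by omega, hPScard,
    fun i => (hval i.1 i.2).choose, φ, fun i => (hval i.1 i.2).choose_spec⟩

set_option maxHeartbeats 2000000 in
lemma main_count {α : Type} [Fintype α] (T : SimpleGraph α) {n t : ℕ} (hn : 0 < n) :
    walkPr (⊤ : SimpleGraph (Fin n)) t (fun w => containsCopy T (traceGraph w))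
      ≤ ∑ r ∈ (Finset.range (T.edgeFinset.card + 1)).filter
          (fun r => (Finset.univ.filter fun a : α => Odd (T.degree a)).card ≤ 2 * r),
          (((t : ℝ) + 1) * T.edgeFinset.card) ^ r
            * (Fintype.card α : ℝ) ^ (T.edgeFinset.card + r)
            * (n : ℝ) ^ (Fintype.card α) / (n : ℝ) ^ (T.edgeFinset.card + r) := by
  classical
  have hnR : (0:ℝ) < (n:ℝ) := by exact_mod_cast hn
  have hnne : (n:ℝ) ≠ 0 := ne_of_gt hnR
  set m := T.edgeFinset.card with hm
  set θ' := (Finset.univ.filter fun a : α => Odd (T.degree a)).card with hθ'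
  set k := Fintype.card α with hk
  rw [walkPr_top hn]
  set W := (Finset.univ.filter fun w : Fin (t+1) → Fin n => containsCopy T (traceGraph w)) with hW
  set 𝒮 := (Finset.univ.filter fun S₀ : Finset (Fin t) =>
      S₀.card = m ∧ θ' ≤ 2 * ((TraceAux.PP S₀).card - S₀.card)
        ∧ S₀.card ≤ (TraceAux.PP S₀).card) with h𝒮
  have hcover : W ⊆ 𝒮.biUnion (fun S₀ =>
      (Finset.univ : Finset ((↥(TraceAux.PP S₀) → α) × (α → Fin n))).biUnion
        (fun cφ => Finset.univ.filter
          (fun w : Fin (t+1) → Fin n => ∀ i : ↥(TraceAux.PP S₀), w i.1 = cφ.2 (cφ.1 i)))) := by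
    intro w hw
    rw [hW, Finset.mem_filter] at hw
    obtain ⟨S₀, h1, h2, h3, c, φ, h4⟩ := extract T w hw.2
    refine Finset.mem_biUnion.mpr ⟨S₀, ?_, Finset.mem_biUnion.mpr ⟨(c, φ), Finset.mem_univ _, ?_⟩⟩
    · exact Finset.mem_filter.mpr ⟨Finset.mem_univ _, by rw [h1, hm], by rw [← hθ'] at h2; exact h2, h3⟩
    · exact Finset.mem_filter.mpr ⟨Finset.mem_univ _, h4⟩
  have hcardW : W.card ≤ ∑ S₀ ∈ 𝒮, k ^ (TraceAux.PP S₀).card * n ^ k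
      * n ^ (t + 1 - (TraceAux.PP S₀).card) := by
    refine le_trans (Finset.card_le_card hcover) (le_trans Finset.card_biUnion_le ?_)
    apply Finset.sum_le_sum
    intro S₀ _
    refine le_trans Finset.card_biUnion_le ?_
    have hval : ∀ cφ : (↥(TraceAux.PP S₀) → α) × (α → Fin n),
        (Finset.univ.filter
          (fun w : Fin (t+1) → Fin n => ∀ i : ↥(TraceAux.PP S₀), w i.1 = cφ.2 (cφ.1 i))).card
        = n ^ (t + 1 - (TraceAux.PP S₀).card) := by
      intro cφ
      have h := card_fixed_on (β := Fin (t+1)) (γ := Fin n) (TraceAux.PP S₀)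
        (fun i => cφ.2 (cφ.1 i))
      rw [Fintype.card_fin, Fintype.card_fin] at h
      convert h using 2
      congr!
    rw [Finset.sum_congr rfl (fun cφ _ => hval cφ), Finset.sum_const, Finset.card_univ,
      smul_eq_mul]
    apply le_of_eq
    rw [Fintype.card_prod, Fintype.card_fun, Fintype.card_fun, Fintype.card_coe,
      Fintype.card_fin]
  have hple : ∀ S₀ : Finset (Fin t), (TraceAux.PP S₀).card ≤ t + 1 := by
    intro S₀
    have := Finset.card_le_univ (TraceAux.PP S₀)
    simpa using this
  have hterm : ∀ S₀ : Finset (Fin t),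
      ((k : ℝ) ^ (TraceAux.PP S₀).card * (n:ℝ) ^ k * (n:ℝ) ^ (t + 1 - (TraceAux.PP S₀).card))
        * (1/(n:ℝ)) ^ (t+1)
      = (k : ℝ) ^ (TraceAux.PP S₀).card * (n:ℝ) ^ k / (n:ℝ) ^ (TraceAux.PP S₀).card := by
    intro S₀
    have hsplit : (n:ℝ)^(t+1) = (n:ℝ)^(t+1-(TraceAux.PP S₀).card) * (n:ℝ)^(TraceAux.PP S₀).card := by
      rw [← pow_add, Nat.sub_add_cancel (hple S₀)]
    rw [div_pow, one_pow, hsplit]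
    field_simp
  have hreal : (W.card : ℝ) * (1/(n:ℝ))^(t+1)
      ≤ ∑ S₀ ∈ 𝒮, (k:ℝ)^(TraceAux.PP S₀).card * (n:ℝ)^k / (n:ℝ)^(TraceAux.PP S₀).card := by
    have h1 : (W.card : ℝ) ≤ ∑ S₀ ∈ 𝒮, ((k : ℝ) ^ (TraceAux.PP S₀).card * (n:ℝ) ^ k
        * (n:ℝ) ^ (t + 1 - (TraceAux.PP S₀).card)) := by
      calc (W.card : ℝ) ≤ ((∑ S₀ ∈ 𝒮, k ^ (TraceAux.PP S₀).card * n ^ k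
          * n ^ (t + 1 - (TraceAux.PP S₀).card) : ℕ) : ℝ) := by exact_mod_cast hcardW
        _ = _ := by push_cast; rfl
    calc (W.card : ℝ) * (1/(n:ℝ))^(t+1)
        ≤ (∑ S₀ ∈ 𝒮, ((k : ℝ) ^ (TraceAux.PP S₀).card * (n:ℝ) ^ k
            * (n:ℝ) ^ (t + 1 - (TraceAux.PP S₀).card))) * (1/(n:ℝ))^(t+1) := by
          apply mul_le_mul_of_nonneg_right h1
          positivity
      _ = ∑ S₀ ∈ 𝒮, (k:ℝ)^(TraceAux.PP S₀).card * (n:ℝ)^k / (n:ℝ)^(TraceAux.PP S₀).card := by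
          rw [Finset.sum_mul]
          exact Finset.sum_congr rfl (fun S₀ _ => hterm S₀)
  refine le_trans hreal ?_
  have hmaps : ∀ S₀ ∈ 𝒮, (TraceAux.PP S₀).card - m
      ∈ (Finset.range (m + 1)).filter (fun r => θ' ≤ 2 * r) := by
    intro S₀ hS
    rw [h𝒮, Finset.mem_filter] at hS
    obtain ⟨-, hcard, hθle, hle⟩ := hS
    have hub : (TraceAux.PP S₀).card ≤ 2 * S₀.card := by
      rw [TraceAux.PP]
      refine le_trans (Finset.card_union_le _ _) ?_
      have h1 := Finset.card_image_le (s := S₀) (f := Fin.castSucc)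
      have h2 := Finset.card_image_le (s := S₀) (f := Fin.succ)
      omega
    rw [Finset.mem_filter, Finset.mem_range]
    omega
  rw [← Finset.sum_fiberwise_of_maps_to hmaps
    (fun S₀ => (k:ℝ)^(TraceAux.PP S₀).card * (n:ℝ)^k / (n:ℝ)^(TraceAux.PP S₀).card)]
  apply Finset.sum_le_sum
  intro r hr
  have hsub : 𝒮.filter (fun S₀ => (TraceAux.PP S₀).card - m = r)
      ⊆ Finset.univ.filter (fun S₀ : Finset (Fin t) =>
          S₀.card = m ∧ (TraceAux.PP S₀).card = m + r) := by
    intro S₀ hS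
    rw [Finset.mem_filter] at hS
    rw [h𝒮, Finset.mem_filter] at hS
    obtain ⟨⟨-, hcard, -, hle⟩, hfib⟩ := hS
    exact Finset.mem_filter.mpr ⟨Finset.mem_univ _, hcard, by omega⟩
  have hcard9 : (𝒮.filter (fun S₀ => (TraceAux.PP S₀).card - m = r)).card ≤ ((t+1)*m)^r :=
    le_trans (Finset.card_le_card hsub) (TraceAux.card_fiber_le t m r)
  have hceq : ∀ S₀ ∈ 𝒮.filter (fun S₀ => (TraceAux.PP S₀).card - m = r),
      (k:ℝ)^(TraceAux.PP S₀).card * (n:ℝ)^k / (n:ℝ)^(TraceAux.PP S₀).card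
        = (k:ℝ)^(m+r) * (n:ℝ)^k / (n:ℝ)^(m+r) := by
    intro S₀ hS
    rw [Finset.mem_filter] at hS
    have hS' := hS.1
    rw [h𝒮, Finset.mem_filter] at hS'
    obtain ⟨-, hcard, -, hle⟩ := hS'
    have : (TraceAux.PP S₀).card = m + r := by omega
    rw [this]
  rw [Finset.sum_congr rfl hceq, Finset.sum_const, nsmul_eq_mul]
  have hcpos : (0:ℝ) ≤ (k:ℝ)^(m+r) * (n:ℝ)^k / (n:ℝ)^(m+r) := by positivity
  calc ((𝒮.filter (fun S₀ => (TraceAux.PP S₀).card - m = r)).card : ℝ)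
        * ((k:ℝ)^(m+r) * (n:ℝ)^k / (n:ℝ)^(m+r))
      ≤ ((((t+1)*m)^r : ℕ) : ℝ) * ((k:ℝ)^(m+r) * (n:ℝ)^k / (n:ℝ)^(m+r)) := by
        apply mul_le_mul_of_nonneg_right _ hcpos
        exact_mod_cast hcard9
    _ = (((t : ℝ) + 1) * m) ^ r * (k : ℝ) ^ (m + r) * (n : ℝ) ^ k / (n : ℝ) ^ (m + r) := by
        push_cast
        ring


lemma stepProb_nonneg {n : ℕ} (G : SimpleGraph (Fin n)) (u v : Fin n) :
    0 ≤ stepProb G u v := by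
  rw [stepProb]
  split
  · positivity
  · exact le_rfl

lemma walkPr_nonneg {n t : ℕ} (G : SimpleGraph (Fin n)) (E : (Fin (t + 1) → Fin n) → Prop) :
    0 ≤ walkPr G t E := by
  rw [walkPr]
  apply Finset.sum_nonneg
  intro w _
  split
  · rw [walkProb]
    apply mul_nonneg (by positivity)
    exact Finset.prod_nonneg (fun i _ => stepProb_nonneg G _ _)
  · exact le_rfl

lemma exists_adj_of_connected {α : Type} [Fintype α] (T : SimpleGraph α) (hconn : T.Connected)
    (hc : 2 ≤ Fintype.card α) (a : α) : ∃ b, T.Adj a b := by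
  obtain ⟨b, hb⟩ := Fintype.exists_ne_of_one_lt_card (by omega) a
  obtain ⟨p⟩ := hconn.preconnected a b
  cases p with
  | nil => exact absurd rfl hb
  | cons h q => exact ⟨_, h⟩

lemma walkPr_eq_zero {α : Type} [Fintype α] (T : SimpleGraph α) (hconn : T.Connected)
    (hc : 2 ≤ Fintype.card α) {n tt : ℕ} (h0 : tt = 0) :
    walkPr (⊤ : SimpleGraph (Fin n)) tt (fun w => containsCopy T (traceGraph w)) = 0 := by
  subst h0
  rw [walkPr]
  apply Finset.sum_eq_zero
  intro w _
  rw [if_neg]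
  rintro ⟨φ, hinj, hφ⟩
  obtain ⟨a⟩ := hconn.nonempty
  obtain ⟨b, hab⟩ := exists_adj_of_connected T hconn hc a
  have h := hφ a b hab
  rw [traceGraph, SimpleGraph.fromRel_adj] at h
  rcases h.2 with ⟨i, -⟩ | ⟨i, -⟩ <;> exact i.elim0

lemma odd_card_pos {α : Type} [Fintype α] (T : SimpleGraph α) (hT : T.IsTree)
    (hc : 2 ≤ Fintype.card α) :
    0 < (Finset.univ.filter fun a : α => Odd (T.degree a)).card := by
  classical
  rw [Finset.card_pos]
  by_contra h
  rw [Finset.not_nonempty_iff_eq_empty, Finset.filter_eq_empty_iff] at h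
  have hdeg2 : ∀ a : α, 2 ≤ T.degree a := by
    intro a
    obtain ⟨b, hb⟩ := exists_adj_of_connected T hT.isConnected hc a
    have hpos : 0 < T.degree a := (SimpleGraph.degree_pos_iff_exists_adj T a).mpr ⟨b, hb⟩
    have heven : ¬ Odd (T.degree a) := h (Finset.mem_univ a)
    rw [Nat.not_odd_iff_even] at heven
    rcases heven with ⟨c, hc2⟩
    omega
  have hsum := SimpleGraph.sum_degrees_eq_twice_card_edges T
  have hcard := hT.card_edgeFinset
  have hge : 2 * Fintype.card α ≤ ∑ v, T.degree v := by
    calc 2 * Fintype.card α = ∑ _v : α, 2 := by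
          rw [Finset.sum_const, Finset.card_univ, smul_eq_mul]; ring
      _ ≤ _ := Finset.sum_le_sum (fun v _ => hdeg2 v)
  omega

lemma oddCount_eq {α : Type} [Fintype α] (T : SimpleGraph α) :
    oddCount T = (Finset.univ.filter fun a : α => Odd (T.degree a)).card := by
  classical
  have hdeg : ∀ v : α, (T.neighborSet v).ncard = T.degree v := by
    intro v
    rw [Set.ncard_eq_toFinset_card']
    congr 1
  rw [oddCount]
  have h1 : {v : α | Odd ((T.neighborSet v).ncard)} = {v : α | Odd (T.degree v)} := by
    ext v
    simp only [Set.mem_setOf_eq, hdeg v]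
  rw [h1, Set.ncard_eq_toFinset_card', Set.toFinset_setOf]


end AuxProofs

/-- **Theorem 4, negative part.** For a fixed tree `T` on at least two vertices with
`θ = odd(T)`, if `t(n) ≪ n^(1-2/θ)` then whp the trace of the lazy simple random walk of
length `t(n)` on the complete graph `K_n` contains no copy of `T`. -/
theorem trace_subtrees_zero {α : Type} [Fintype α] (T : SimpleGraph α) (hT : T.IsTree)
    (hcard : 2 ≤ Fintype.card α) (θ : ℕ) (hθ : θ = oddCount T)
    (t : ℕ → ℕ)
    (ht : Filter.Tendsto (fun n : ℕ => (t n : ℝ) / (n : ℝ) ^ (1 - 2 / (θ : ℝ)))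
      Filter.atTop (nhds 0)) :
    Filter.Tendsto
      (fun n : ℕ => walkPr (⊤ : SimpleGraph (Fin n)) (t n)
        (fun w => containsCopy T (traceGraph w)))
      Filter.atTop (nhds 0) := by
  classical
  have hθeq : θ = (Finset.univ.filter fun a : α => Odd (T.degree a)).card := by
    rw [hθ, oddCount_eq]
  have hθpos : 1 ≤ θ := by rw [hθeq]; exact odd_card_pos T hT hcard
  by_cases hθ2 : θ ≤ 2
  · -- small θ: eventually t n = 0
    have hθR : (0:ℝ) < (θ:ℝ) := by exact_mod_cast hθpos
    have hexp : (1:ℝ) - 2 / (θ:ℝ) ≤ 0 := by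
      have h2 : (θ:ℝ) ≤ 2 := by exact_mod_cast hθ2
      have : (1:ℝ) ≤ 2 / (θ:ℝ) := by
        rw [le_div_iff₀ hθR]; linarith
      linarith
    have htend : Filter.Tendsto (fun n : ℕ => (t n : ℝ)) Filter.atTop (nhds 0) := by
      apply squeeze_zero' (Filter.Eventually.of_forall (fun n => by positivity)) ?_ ht
      filter_upwards [Filter.eventually_ge_atTop 1] with n hn1
      have hx1 : (1:ℝ) ≤ (n:ℝ) := by exact_mod_cast hn1
      have hepos : (0:ℝ) < (n:ℝ) ^ ((1:ℝ) - 2/(θ:ℝ)) :=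
        Real.rpow_pos_of_pos (by linarith) _
      have hele : (n:ℝ) ^ ((1:ℝ) - 2/(θ:ℝ)) ≤ 1 :=
        Real.rpow_le_one_of_one_le_of_nonpos hx1 hexp
      rw [le_div_iff₀ hepos]
      exact mul_le_of_le_one_right (by positivity) hele
    have hev : ∀ᶠ n in Filter.atTop, t n = 0 := by
      have hlt := htend.eventually_lt_const one_pos
      filter_upwards [hlt] with n hn
      have : (t n : ℝ) < 1 := hn
      exact_mod_cast Nat.lt_one_iff.mp (by exact_mod_cast this)
    refine Filter.Tendsto.congr' ?_ tendsto_const_nhds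
    filter_upwards [hev] with n h0
    exact (walkPr_eq_zero T hT.isConnected hcard h0).symm
  · -- main case θ ≥ 3
    push_neg at hθ2
    have hθ3 : 3 ≤ θ := hθ2
    set m := T.edgeFinset.card with hm
    set θ' := (Finset.univ.filter fun a : α => Odd (T.degree a)).card with hθ'
    set k := Fintype.card α with hk
    have hkm : m + 1 = k := hT.card_edgeFinset
    have hθR : (0:ℝ) < (θ:ℝ) := by
      have : (3:ℝ) ≤ (θ:ℝ) := by exact_mod_cast hθ3
      linarith
    set e : ℝ := (1:ℝ) - 2 / (θ:ℝ) with he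
    have hepos : 0 < e := by
      rw [he]
      have h3 : (3:ℝ) ≤ (θ:ℝ) := by exact_mod_cast hθ3
      have : 2 / (θ:ℝ) ≤ 2/3 := by
        apply div_le_div_of_nonneg_left (by norm_num) (by norm_num) h3
      linarith
    set u : ℕ → ℝ := fun n => ((t n : ℝ) + 1) / (n:ℝ) ^ e with hu
    have hutend : Filter.Tendsto u Filter.atTop (nhds 0) := by
      have hinv : Filter.Tendsto (fun n : ℕ => ((n:ℝ) ^ e)⁻¹) Filter.atTop (nhds 0) := by
        apply Filter.Tendsto.inv_tendsto_atTop
        exact (tendsto_rpow_atTop hepos).comp tendsto_natCast_atTop_atTop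
      have := ht.add hinv
      rw [add_zero] at this
      apply this.congr
      intro n
      simp only [hu]
      rw [add_div, one_div]
    set R := (Finset.range (m + 1)).filter (fun r => θ' ≤ 2 * r) with hR
    have hbound : ∀ᶠ n in Filter.atTop,
        walkPr (⊤ : SimpleGraph (Fin n)) (t n) (fun w => containsCopy T (traceGraph w))
          ≤ ∑ r ∈ R, (m:ℝ)^r * (k:ℝ)^(m+r) * u n ^ r := by
      filter_upwards [Filter.eventually_ge_atTop 1] with n hn1
      have hx1 : (1:ℝ) ≤ (n:ℝ) := by exact_mod_cast hn1
      have hx0 : (0:ℝ) < (n:ℝ) := by linarith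
      refine le_trans (main_count T (show 0 < n by omega)) (Finset.sum_le_sum ?_)
      intro r hr
      rw [Finset.mem_filter, Finset.mem_range] at hr
      have h2r : (θ:ℝ) ≤ 2 * r := by
        have hh : θ ≤ 2 * r := by rw [hθeq, hθ']; exact hr.2
        exact_mod_cast hh
      have e1 : (n:ℝ)^k / (n:ℝ)^(m+r) = (n:ℝ) ^ ((1:ℝ) - (r:ℝ)) := by
        rw [← hkm, pow_succ, pow_add, Real.rpow_sub hx0, Real.rpow_one, Real.rpow_natCast]
        rw [mul_div_mul_left _ _ (by positivity : ((n:ℝ)^m) ≠ 0)]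
      have e2 : (n:ℝ) ^ ((1:ℝ) - (r:ℝ)) ≤ (n:ℝ) ^ (-(e * (r:ℝ))) := by
        apply Real.rpow_le_rpow_of_exponent_le hx1
        rw [he]
        have hfrac : (1:ℝ) ≤ 2 * (r:ℝ) / (θ:ℝ) := by
          rw [le_div_iff₀ hθR]; linarith
        have : -(((1:ℝ) - 2/(θ:ℝ)) * (r:ℝ)) = -(r:ℝ) + 2 * (r:ℝ) / (θ:ℝ) := by
          field_simp
          ring
        rw [this]
        linarith
      have e3 : u n ^ r = ((t n:ℝ) + 1)^r * (n:ℝ) ^ (-(e * (r:ℝ))) := by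
        rw [hu, div_pow, ← Real.rpow_natCast ((n:ℝ) ^ e) r, ← Real.rpow_mul (le_of_lt hx0),
          div_eq_mul_inv, ← Real.rpow_neg (le_of_lt hx0)]
      calc (((t n : ℝ) + 1) * (m:ℝ)) ^ r * (k : ℝ) ^ (m + r) * (n : ℝ) ^ k / (n : ℝ) ^ (m + r)
          = (((t n : ℝ) + 1) * (m:ℝ)) ^ r * (k : ℝ) ^ (m + r) * ((n:ℝ)^k / (n:ℝ)^(m+r)) := by
            ring
        _ = (((t n : ℝ) + 1) * (m:ℝ)) ^ r * (k : ℝ) ^ (m + r) * ((n:ℝ) ^ ((1:ℝ) - (r:ℝ))) := by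
            rw [e1]
        _ ≤ (((t n : ℝ) + 1) * (m:ℝ)) ^ r * (k : ℝ) ^ (m + r) * ((n:ℝ) ^ (-(e * (r:ℝ)))) := by
            apply mul_le_mul_of_nonneg_left e2 (by positivity)
        _ = (m:ℝ)^r * (k:ℝ)^(m+r) * u n ^ r := by
            rw [e3, mul_pow]
            ring
    have hgtend : Filter.Tendsto (fun n => ∑ r ∈ R, (m:ℝ)^r * (k:ℝ)^(m+r) * u n ^ r)
        Filter.atTop (nhds 0) := by
      have h0 : (0:ℝ) = ∑ r ∈ R, (0:ℝ) := by rw [Finset.sum_const_zero]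
      rw [h0]
      apply tendsto_finset_sum
      intro r hr
      rw [hR, Finset.mem_filter] at hr
      have hrpos : 1 ≤ r := by
        have := hr.2
        rw [← hθeq] at this
        omega
      have hpow : Filter.Tendsto (fun n => u n ^ r) Filter.atTop (nhds 0) := by
        have := hutend.pow r
        rwa [zero_pow (by omega : r ≠ 0)] at this
      have := hpow.const_mul ((m:ℝ)^r * (k:ℝ)^(m+r))
      rwa [mul_zero] at this
    exact squeeze_zero'
      (Filter.Eventually.of_forall (fun n => walkPr_nonneg _ _)) hbound hgtend
end

section
/- For every integer K ≥ 1 and every integer q ≥ 0 there exists a constant C > 0 such that for all integers t ≥ 1, B ≥ 1 and 1 ≤ r ≤ w ≤ min(K, t), if W is sampled uniformly at random from W_{w,r} (the set of subsets of [t] of size w with exactly r runs), then the probability that q_B(W) ≥ q is at most C · (B/t)^q. -/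
open Filter
open scoped Classical

/-- The number of maximal runs of consecutive integers making up `W`. -/
def runCount (W : Finset ℕ) : ℕ := (W.filter (fun i => i + 1 ∉ W)).card

/-- The number of `B`-defective runs of `W`: runs (other than the first) whose gap to the
preceding run is strictly less than `3B`. -/
def defCount (B : ℕ) (W : Finset ℕ) : ℕ :=
  (W.filter (fun s => s - 1 ∉ W ∧ ∃ j ∈ W, j < s ∧ s ≤ j + 3 * B)).card

open Finset in
section
open Finset

namespace ScatterAux

noncomputable def prevM (W : Finset ℕ) (u : ℕ) : ℕ :=
  if h : (W.filter (· < u)).Nonempty then (W.filter (· < u)).max' h else 0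

noncomputable def defStarts (B : ℕ) (W : Finset ℕ) : Finset ℕ :=
  W.filter (fun s => s - 1 ∉ W ∧ ∃ j ∈ W, j < s ∧ s ≤ j + 3 * B)

noncomputable def EW (t : ℕ) (W : Finset ℕ) : Finset ℕ :=
  W.filter (fun s => s - 1 ∉ W) ∪ {t + 1}

noncomputable def rank (E : Finset ℕ) (u : ℕ) : ℕ := (E.filter (· < u)).card

def fmap (D s0 y0 x : ℕ) : ℕ :=
  x + (if s0 ≤ x then D else 0) - (if y0 ≤ x then D else 0)

lemma le_prevM {W : Finset ℕ} {u j : ℕ} (hj : j ∈ W) (hju : j < u) : j ≤ prevM W u := by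
  have hm : j ∈ W.filter (· < u) := mem_filter.2 ⟨hj, hju⟩
  have hne : (W.filter (· < u)).Nonempty := ⟨j, hm⟩
  rw [prevM, dif_pos hne]
  exact le_max' (W.filter (· < u)) j hm

lemma prevM_mem {W : Finset ℕ} {u : ℕ} (h : (W.filter (· < u)).Nonempty) :
    prevM W u ∈ W ∧ prevM W u < u := by
  rw [prevM, dif_pos h]
  have := max'_mem _ h
  rw [mem_filter] at this
  exact this

lemma rank_lt_rank {E : Finset ℕ} {u v : ℕ} (hu : u ∈ E) (huv : u < v) :
    rank E u < rank E v := by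
  apply card_lt_card
  constructor
  · intro a ha
    rw [mem_filter] at ha ⊢
    exact ⟨ha.1, lt_trans ha.2 huv⟩
  · intro hsub
    have : u ∈ E.filter (· < v) := mem_filter.2 ⟨hu, huv⟩
    have := mem_filter.1 (hsub this)
    exact absurd this.2 (lt_irrefl u)

lemma rank_injOn {E : Finset ℕ} {u v : ℕ} (hu : u ∈ E) (hv : v ∈ E)
    (h : rank E u = rank E v) : u = v := by
  rcases Nat.lt_trichotomy u v with hlt | he | hgt
  · exact absurd h (Nat.ne_of_lt (rank_lt_rank hu hlt))
  · exact he
  · exact absurd h.symm (Nat.ne_of_lt (rank_lt_rank hv hgt))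

lemma rank_lt {t : ℕ} {W : Finset ℕ} (u : ℕ) : rank (EW t W) u < W.card + 2 := by
  have h1 : rank (EW t W) u ≤ (EW t W).card := card_le_card (filter_subset _ _)
  have h2 : (EW t W).card ≤ (W.filter (fun s => s - 1 ∉ W)).card + 1 := by
    simpa [EW] using card_union_le (W.filter (fun s => s - 1 ∉ W)) {t + 1}
  have h3 : (W.filter (fun s => s - 1 ∉ W)).card ≤ W.card := card_le_card (filter_subset _ _)
  omega

lemma mem_EW {t : ℕ} {W : Finset ℕ} {u : ℕ} (h : u ∈ EW t W) :
    (u ∈ W ∧ u - 1 ∉ W) ∨ u = t + 1 := by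
  rw [EW, mem_union, mem_singleton] at h
  rcases h with h | h
  · exact Or.inl (mem_filter.1 h)
  · exact Or.inr h


/-- Hypothesis bundle for the gap-surgery map. -/
structure Ctx (t B m c s0 y0 : ℕ) (W : Finset ℕ) : Prop where
  hWt : W ⊆ Finset.Icc 1 t
  hB : 1 ≤ B
  hc1 : 1 ≤ c
  hcm : c ≤ m
  hs0W : s0 ∈ W
  hs0p : s0 - 1 ∉ W
  hs0gap1 : prevM W s0 + 2 ≤ s0
  hs0gap2 : s0 ≤ prevM W s0 + 3 * B
  hs0prev : prevM W s0 ∈ W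
  hy0E : y0 ∈ W ∨ y0 = t + 1
  hy0gap : prevM W y0 + 3 * B * m + 2 ≤ y0
  hy0t : y0 ≤ t + 1

namespace Ctx

variable {t B m c s0 y0 : ℕ} {W : Finset ℕ} (h : Ctx t B m c s0 y0 W)
include h

lemma hDm : 3 * B * c ≤ 3 * B * m := Nat.mul_le_mul_left _ h.hcm

lemma hB3 : 3 * B ≤ 3 * B * m := by
  have := Nat.mul_le_mul_left (3 * B) (le_trans h.hc1 h.hcm)
  simpa using this

lemma mem_ge_one {x : ℕ} (hx : x ∈ W) : 1 ≤ x := (mem_Icc.1 (h.hWt hx)).1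
lemma mem_le_t {x : ℕ} (hx : x ∈ W) : x ≤ t := (mem_Icc.1 (h.hWt hx)).2

/-- any element of `W` below `y0` is at distance at least `3Bm+2` from `y0`. -/
lemma below_y0 {x : ℕ} (hx : x ∈ W) (hxy : x < y0) : x + 3 * B * m + 2 ≤ y0 := by
  have := le_prevM hx hxy
  have := h.hy0gap
  omega

lemma s0_ne_y0 : s0 ≠ y0 := by
  intro he
  have h1 := h.hs0gap2
  have h2 := h.hy0gap
  have h3 := h.hB3
  rw [he] at h1
  omega

lemma y0_ge : 3 * B * m + 2 ≤ y0 := by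
  have := h.hy0gap; omega

/-- Core strict monotonicity, including the two-step version. -/
lemma core {u v : ℕ} (hu : u ∈ W) (hv : v ∈ W) (huv : u < v) :
    fmap (3 * B * c) s0 y0 u < fmap (3 * B * c) s0 y0 v ∧
      (u + 2 ≤ v → fmap (3 * B * c) s0 y0 u + 2 ≤ fmap (3 * B * c) s0 y0 v) := by
  have hDm := h.hDm
  have hyg := h.y0_ge
  have hcross : u < y0 → y0 ≤ v → u + 3 * B * m + 2 ≤ y0 := fun h1 _ => h.below_y0 hu h1
  have hu1 := h.mem_ge_one hu
  unfold fmap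
  rcases le_or_gt y0 u with hy_u | hy_u
  · -- both beyond y0
    have hy_v : y0 ≤ v := le_trans hy_u (le_of_lt huv)
    rw [if_pos hy_u, if_pos hy_v]
    split_ifs with h1 h2 h2 <;> omega
  · rcases le_or_gt y0 v with hy_v | hy_v
    · -- crossing
      have hk := hcross hy_u hy_v
      rw [if_neg (Nat.not_le.2 hy_u), if_pos hy_v]
      split_ifs with h1 h2 h2 <;> omega
    · -- both below y0
      rw [if_neg (Nat.not_le.2 hy_u), if_neg (Nat.not_le.2 hy_v)]
      split_ifs with h1 h2 h2 <;> omega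

lemma mono_lt {u v : ℕ} (hu : u ∈ W) (hv : v ∈ W) (huv : u < v) :
    fmap (3 * B * c) s0 y0 u < fmap (3 * B * c) s0 y0 v := (h.core hu hv huv).1

lemma mono_iff {u v : ℕ} (hu : u ∈ W) (hv : v ∈ W) :
    (fmap (3 * B * c) s0 y0 u ≤ fmap (3 * B * c) s0 y0 v ↔ u ≤ v) := by
  constructor
  · intro hle
    by_contra hlt
    exact absurd hle (Nat.not_le.2 (h.mono_lt hv hu (Nat.not_le.1 hlt)))
  · intro hle
    rcases Nat.eq_or_lt_of_le hle with he | hlt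
    · rw [he]
    · exact le_of_lt (h.mono_lt hu hv hlt)

lemma injOn : Set.InjOn (fmap (3 * B * c) s0 y0) ↑W := by
  intro a ha b hb hab
  rcases Nat.lt_trichotomy a b with hl | he | hg
  · exact absurd hab (Nat.ne_of_lt (h.mono_lt ha hb hl))
  · exact he
  · exact absurd hab.symm (Nat.ne_of_lt (h.mono_lt hb ha hg))

lemma adj {u : ℕ} (hu : u ∈ W) (hu1 : u + 1 ∈ W) :
    fmap (3 * B * c) s0 y0 (u + 1) = fmap (3 * B * c) s0 y0 u + 1 := by
  have hDm := h.hDm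
  have hyg := h.y0_ge
  have hs : s0 ≠ u + 1 := by
    intro he
    apply h.hs0p
    rw [he]
    simpa using hu
  have hy : y0 ≠ u + 1 := by
    intro he
    have := h.below_y0 hu (by omega)
    omega
  have huy : y0 ≤ u → 3 * B * m + 2 ≤ u := fun hh => by have := h.y0_ge; omega
  unfold fmap
  split_ifs with h1 h2 h3 h4 h5 h6 h7 h8 <;> omega

lemma adj_iff {u v : ℕ} (hu : u ∈ W) (hv : v ∈ W) :
    fmap (3 * B * c) s0 y0 v = fmap (3 * B * c) s0 y0 u + 1 ↔ v = u + 1 := by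
  constructor
  · intro he
    rcases Nat.lt_trichotomy v (u + 1) with hl | hx | hg
    · have : v < u ∨ v = u := by omega
      rcases this with hl' | rfl
      · have := h.mono_lt hv hu hl'; omega
      · omega
    · exact hx
    · have := (h.core hu hv (by omega)).2 (by omega)
      omega
  · intro he; rw [he]; exact h.adj hu (he ▸ hv)

lemma f_ge_one {x : ℕ} (hx : x ∈ W) : 1 ≤ fmap (3 * B * c) s0 y0 x := by
  have hDm := h.hDm
  have hyg := h.y0_ge
  have hx1 := h.mem_ge_one hx
  unfold fmap
  split_ifs with h1 h2 h2 <;> omega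

lemma f_le_t {x : ℕ} (hx : x ∈ W) : fmap (3 * B * c) s0 y0 x ≤ t := by
  have hDm := h.hDm
  have hyg := h.y0_ge
  have hxt := h.mem_le_t hx
  have hy0t := h.hy0t
  rcases le_or_gt y0 x with hyx | hyx
  · unfold fmap
    rw [if_pos hyx]
    split_ifs with h1 <;> omega
  · have := h.below_y0 hx hyx
    unfold fmap
    rw [if_neg (Nat.not_le.2 hyx)]
    split_ifs with h1 <;> omega

lemma f_sentinel : fmap (3 * B * c) s0 y0 (t + 1) = t + 1 := by
  have hs0t := h.mem_le_t h.hs0W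
  have hy0t := h.hy0t
  have hyg := h.y0_ge
  unfold fmap
  rw [if_pos (by omega), if_pos (by omega)]
  omega

end Ctx
end ScatterAux

namespace ScatterAux
namespace Ctx
variable {t B m c s0 y0 : ℕ} {W : Finset ℕ} (h : Ctx t B m c s0 y0 W)
include h

local notation "F" => fmap (3 * B * c) s0 y0

lemma mem_image_succ_iff {u : ℕ} (hu : u ∈ W) :
    F u + 1 ∈ W.image F ↔ u + 1 ∈ W := by
  constructor
  · intro hm
    rcases mem_image.1 hm with ⟨v, hv, hev⟩
    have : v = u + 1 := (h.adj_iff hu hv).1 hev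
    rwa [← this]
  · intro hm
    rw [← h.adj hu hm]
    exact mem_image_of_mem _ hm

lemma mem_image_pred_iff {u : ℕ} (hu : u ∈ W) :
    F u - 1 ∈ W.image F ↔ u - 1 ∈ W := by
  have hf1 : 1 ≤ F u := h.f_ge_one hu
  constructor
  · intro hm
    rcases mem_image.1 hm with ⟨v, hv, hev⟩
    have hev' : F u = F v + 1 := by omega
    have : u = v + 1 := (h.adj_iff hv hu).1 hev'
    have : u - 1 = v := by omega
    rwa [this]
  · intro hm
    have hu1 : 1 ≤ u := h.mem_ge_one hu
    have hu2 : 2 ≤ u := by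
      have := h.mem_ge_one hm; omega
    have he : u - 1 + 1 = u := by omega
    have := h.adj hm (by rwa [he])
    rw [he] at this
    have : F (u - 1) = F u - 1 := by omega
    rw [← this]
    exact mem_image_of_mem _ hm

lemma runCount_image_card :
    ((W.image F).filter (fun i => i + 1 ∉ W.image F)).card
      = (W.filter (fun i => i + 1 ∉ W)).card := by
  rw [filter_image]
  rw [filter_congr (fun u hu => not_congr (h.mem_image_succ_iff hu))]
  exact card_image_of_injOn (h.injOn.mono (fun x hx => Finset.mem_coe.2 (mem_filter.1 (Finset.mem_coe.1 hx)).1))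

lemma starts_image :
    (W.image F).filter (fun s => s - 1 ∉ W.image F)
      = (W.filter (fun s => s - 1 ∉ W)).image F := by
  rw [filter_image]
  congr 1
  exact filter_congr (fun u hu => not_congr (h.mem_image_pred_iff hu))

lemma EW_image : EW t (W.image F) = (EW t W).image F := by
  rw [EW, EW, image_union, h.starts_image]
  congr 1
  rw [image_singleton, h.f_sentinel]

omit h in lemma mem_EW_cases {u : ℕ} (hu : u ∈ EW t W) : u ∈ W ∨ u = t + 1 := by
  rcases mem_EW hu with h1 | h1
  · exact Or.inl h1.1
  · exact Or.inr h1

lemma mono_lt_E {u v : ℕ} (hu : u ∈ EW t W) (hv : v ∈ EW t W) (huv : u < v) :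
    F u < F v := by
  rcases mem_EW_cases hu with h1 | h1 <;> rcases mem_EW_cases hv with h2 | h2
  · exact h.mono_lt h1 h2 huv
  · have := h.f_le_t h1
    rw [h2, h.f_sentinel]
    omega
  · have := h.mem_le_t h2
    omega
  · omega

lemma injOn_E : Set.InjOn F ↑(EW t W) := by
  intro a ha b hb hab
  rw [mem_coe] at ha hb
  rcases Nat.lt_trichotomy a b with hl | he | hg
  · exact absurd hab (Nat.ne_of_lt (h.mono_lt_E ha hb hl))
  · exact he
  · exact absurd hab.symm (Nat.ne_of_lt (h.mono_lt_E hb ha hg))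

lemma rank_image {u : ℕ} (hu : u ∈ EW t W) :
    rank (EW t (W.image F)) (F u) = rank (EW t W) u := by
  rw [rank, rank, h.EW_image, filter_image]
  rw [filter_congr (fun a ha => by
    constructor
    · intro hfa
      by_contra hau
      have : u ≤ a := Nat.not_lt.1 hau
      rcases Nat.eq_or_lt_of_le this with he | hlt
      · rw [he] at hfa; exact absurd hfa (lt_irrefl _)
      · exact absurd hfa (Nat.not_lt.2 (le_of_lt (h.mono_lt_E hu ha hlt)))
    · intro hau
      exact h.mono_lt_E ha hu hau)]
  exact card_image_of_injOn (h.injOn_E.mono (fun x hx => Finset.mem_coe.2 (mem_filter.1 (Finset.mem_coe.1 hx)).1))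

end Ctx
end ScatterAux

namespace ScatterAux
namespace Ctx
variable {t B m c s0 y0 : ℕ} {W : Finset ℕ} (h : Ctx t B m c s0 y0 W)
include h

local notation "F" => fmap (3 * B * c) s0 y0

lemma image_card : (W.image F).card = W.card := card_image_of_injOn h.injOn

lemma image_subset_Icc : W.image F ⊆ Finset.Icc 1 t := by
  intro x hx
  rcases mem_image.1 hx with ⟨u, hu, rfl⟩
  exact mem_Icc.2 ⟨h.f_ge_one hu, h.f_le_t hu⟩

lemma mono_lt_iff {u v : ℕ} (hu : u ∈ W) (hv : v ∈ W) : F u < F v ↔ u < v := by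
  rw [← Nat.not_le, ← Nat.not_le]
  exact not_congr (h.mono_iff hv hu)

lemma runCount_image : runCount (W.image F) = runCount W := by
  rw [runCount, runCount, filter_image]
  rw [filter_congr (fun u hu => not_congr (h.mem_image_succ_iff hu))]
  exact card_image_of_injOn (h.injOn.mono (fun x hx => Finset.mem_coe.2 (mem_filter.1 (Finset.mem_coe.1 hx)).1))

lemma gap_image_s0 :
    F s0 = F (prevM W s0) + (s0 - prevM W s0) + 3 * B * c := by
  set p := prevM W s0 with hp
  have hps : p + 2 ≤ s0 := h.hs0gap1
  have hDm := h.hDm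
  have hyg := h.y0_ge
  have hy : y0 ≤ p ∨ s0 < y0 := by
    by_contra hc
    push_neg at hc
    obtain ⟨h1, h2⟩ := hc
    have hne : y0 ≠ s0 := fun e => h.s0_ne_y0 e.symm
    have hyW : y0 ∈ W := by
      rcases h.hy0E with hw | hw
      · exact hw
      · exfalso; have := h.mem_le_t h.hs0W; omega
    have := le_prevM hyW (lt_of_le_of_ne h2 hne)
    omega
  unfold fmap
  rw [if_pos (le_refl s0), if_neg (by omega : ¬ s0 ≤ p)]
  rcases hy with hy | hy
  · rw [if_pos (by omega : y0 ≤ s0), if_pos hy]; omega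
  · rw [if_neg (by omega : ¬ y0 ≤ s0), if_neg (by omega : ¬ y0 ≤ p)]; omega

lemma prevM_image_s0 :
    prevM (W.image F) (F s0) = F (prevM W s0) := by
  set p := prevM W s0 with hp
  have hpW : p ∈ W := h.hs0prev
  have hps : p + 2 ≤ s0 := h.hs0gap1
  have hfilter : (W.image F).filter (· < F s0) = (W.filter (· < s0)).image F := by
    rw [filter_image]
    congr 1
    exact filter_congr (fun a ha => h.mono_lt_iff ha h.hs0W)
  have hmem : F p ∈ (W.image F).filter (· < F s0) := by
    rw [hfilter]
    exact mem_image_of_mem _ (mem_filter.2 ⟨hpW, by omega⟩)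
  have hne : ((W.image F).filter (· < F s0)).Nonempty := ⟨_, hmem⟩
  rw [prevM, dif_pos hne]
  set M := ((W.image F).filter (· < F s0)).max' hne with hM
  apply le_antisymm
  · have h1 : M ∈ (W.image F).filter (· < F s0) := max'_mem _ hne
    rw [hfilter] at h1
    rcases mem_image.1 h1 with ⟨a, ha, hae⟩
    rw [mem_filter] at ha
    have hap : a ≤ p := le_prevM ha.1 ha.2
    rw [← hae]
    exact (h.mono_iff ha.1 hpW).2 hap
  · exact le_max' _ _ hmem

lemma defStarts_map {u : ℕ} (hu : u ∈ defStarts B W) (hus : u ≠ s0) :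
    F u ∈ defStarts B (W.image F) := by
  rw [defStarts, mem_filter] at hu
  obtain ⟨huW, hu1, j, hjW, hjlt, hjle⟩ := hu
  have hpne : (W.filter (· < u)).Nonempty := ⟨j, mem_filter.2 ⟨hjW, hjlt⟩⟩
  obtain ⟨hpW, hplt⟩ := prevM_mem hpne
  set p := prevM W u with hp
  have hjp : j ≤ p := le_prevM hjW hjlt
  have hup : u ≤ p + 3 * B := by omega
  have hpu2 : p + 2 ≤ u := by
    have hne1 : p ≠ u - 1 := fun e => hu1 (e ▸ hpW)
    have hu1' : 1 ≤ u := h.mem_ge_one huW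
    omega
  have hs : s0 ≤ p ∨ u < s0 := by
    by_contra hc
    push_neg at hc
    obtain ⟨h1, h2⟩ := hc
    have hne2 : s0 ≠ u := fun e => hus e.symm
    have := le_prevM h.hs0W (lt_of_le_of_ne h2 hne2)
    omega
  have hy : y0 ≤ p ∨ u < y0 := by
    by_contra hc
    push_neg at hc
    obtain ⟨h1, h2⟩ := hc
    have hyu : y0 ≠ u := by
      intro e
      have hpe : prevM W y0 = p := by rw [e, hp]
      have h3 := h.hy0gap
      have h4 := h.hB3
      omega
    have hyW : y0 ∈ W := by
      rcases h.hy0E with hw | hw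
      · exact hw
      · exfalso; have := h.mem_le_t huW; omega
    have := le_prevM hyW (lt_of_le_of_ne h2 hyu)
    omega
  have hDm := h.hDm
  have hyg := h.y0_ge
  have hgap : F u = F p + (u - p) := by
    unfold fmap
    rcases hs with hs | hs <;> rcases hy with hy | hy
    · rw [if_pos (by omega : s0 ≤ u), if_pos hs, if_pos (by omega : y0 ≤ u), if_pos hy]; omega
    · rw [if_pos (by omega : s0 ≤ u), if_pos hs, if_neg (by omega : ¬ y0 ≤ u), if_neg (by omega : ¬ y0 ≤ p)]; omega
    · rw [if_neg (by omega : ¬ s0 ≤ u), if_neg (by omega : ¬ s0 ≤ p), if_pos (by omega : y0 ≤ u), if_pos hy]; omega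
    · rw [if_neg (by omega : ¬ s0 ≤ u), if_neg (by omega : ¬ s0 ≤ p), if_neg (by omega : ¬ y0 ≤ u), if_neg (by omega : ¬ y0 ≤ p)]; omega
  rw [defStarts, mem_filter]
  refine ⟨mem_image_of_mem _ huW, ?_, ⟨F p, mem_image_of_mem _ hpW, ?_, ?_⟩⟩
  · rw [h.mem_image_pred_iff huW]
    exact hu1
  · omega
  · omega

lemma defCount_image (hs0d : s0 ∈ defStarts B W) :
    defCount B W ≤ defCount B (W.image F) + 1 := by
  have hsub : ((defStarts B W).erase s0).image F ⊆ defStarts B (W.image F) := by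
    intro x hx
    rcases mem_image.1 hx with ⟨u, hu, rfl⟩
    rw [mem_erase] at hu
    exact h.defStarts_map hu.2 hu.1
  have hinj : Set.InjOn F ↑((defStarts B W).erase s0) := by
    apply h.injOn.mono
    intro x hx
    have : x ∈ (defStarts B W).erase s0 := Finset.mem_coe.1 hx
    have : x ∈ defStarts B W := mem_of_mem_erase this
    exact Finset.mem_coe.2 (mem_filter.1 this).1
  have h1 : ((defStarts B W).erase s0).card ≤ (defStarts B (W.image F)).card := by
    rw [← card_image_of_injOn hinj]
    exact card_le_card hsub
  have h2 : ((defStarts B W).erase s0).card = (defStarts B W).card - 1 :=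
    card_erase_of_mem hs0d
  have h3 : 1 ≤ (defStarts B W).card := card_pos.2 ⟨s0, hs0d⟩
  have e1 : defCount B W = (defStarts B W).card := rfl
  have e2 : defCount B (W.image F) = (defStarts B (W.image F)).card := rfl
  omega

lemma recover {x : ℕ} (hx : x ∈ W) :
    fmap (3 * B * c) (F y0) (F s0) (F x) = x := by
  have hDm := h.hDm
  have hyg := h.y0_ge
  have hs_iff : F s0 ≤ F x ↔ s0 ≤ x := h.mono_iff h.hs0W hx
  have hy_iff : F y0 ≤ F x ↔ y0 ≤ x := by
    rcases h.hy0E with hw | hw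
    · exact h.mono_iff hw hx
    · subst hw
      rw [h.f_sentinel]
      have h1 := h.f_le_t hx
      have h2 := h.mem_le_t hx
      constructor <;> intro hh <;> omega
  show F x + (if F y0 ≤ F x then 3 * B * c else 0) - (if F s0 ≤ F x then 3 * B * c else 0) = x
  rcases le_or_gt s0 x with hs | hs <;> rcases le_or_gt y0 x with hy | hy
  · have hz : F x = x + 3 * B * c - 3 * B * c := by
      unfold fmap; rw [if_pos hs, if_pos hy]
    rw [if_pos (hy_iff.2 hy), if_pos (hs_iff.2 hs)]
    omega
  · have hz : F x = x + 3 * B * c - 0 := by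
      unfold fmap; rw [if_pos hs, if_neg (Nat.not_le.2 hy)]
    rw [if_neg (fun hc => absurd (hy_iff.1 hc) (Nat.not_le.2 hy)), if_pos (hs_iff.2 hs)]
    omega
  · have hxD : 3 * B * m + 2 ≤ x := le_trans hyg hy
    have hz : F x = x + 0 - 3 * B * c := by
      unfold fmap; rw [if_neg (Nat.not_le.2 hs), if_pos hy]
    rw [if_pos (hy_iff.2 hy), if_neg (fun hc => absurd (hs_iff.1 hc) (Nat.not_le.2 hs))]
    omega
  · have hz : F x = x + 0 - 0 := by
      unfold fmap; rw [if_neg (Nat.not_le.2 hs), if_neg (Nat.not_le.2 hy)]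
    rw [if_neg (fun hc => absurd (hy_iff.1 hc) (Nat.not_le.2 hy)),
        if_neg (fun hc => absurd (hs_iff.1 hc) (Nat.not_le.2 hs))]
    omega

end Ctx
end ScatterAux

namespace ScatterAux

lemma sentinel_mem_EW (t : ℕ) (W : Finset ℕ) : t + 1 ∈ EW t W := by
  rw [EW, mem_union, mem_singleton]; exact Or.inr rfl

lemma cover {t : ℕ} {W : Finset ℕ} (hW : W ⊆ Finset.Icc 1 t) :
    Finset.Icc 1 t \ W ⊆ (EW t W).biUnion (fun u => Finset.Ioo (prevM W u) u) := by
  intro x hx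
  rw [Finset.mem_sdiff, mem_Icc] at hx
  obtain ⟨⟨hx1, hxt⟩, hxW⟩ := hx
  have hTne : ((EW t W).filter (x < ·)).Nonempty :=
    ⟨t + 1, mem_filter.2 ⟨sentinel_mem_EW t W, by omega⟩⟩
  set u := ((EW t W).filter (x < ·)).min' hTne with hu
  have humem : u ∈ (EW t W).filter (x < ·) := min'_mem _ hTne
  rw [mem_filter] at humem
  obtain ⟨huE, hxu⟩ := humem
  have claim : ∀ j ∈ W, j < u → j < x := by
    intro j hj hju
    by_contra hcx
    have hxj : x < j := by
      rcases Nat.eq_or_lt_of_le (Nat.not_lt.1 hcx) with he | hl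
      · exact absurd (he ▸ hj) hxW
      · exact hl
    have hWgtne : (W.filter (x < ·)).Nonempty := ⟨j, mem_filter.2 ⟨hj, hxj⟩⟩
    set u2 := (W.filter (x < ·)).min' hWgtne with hu2
    have hu2mem : u2 ∈ W.filter (x < ·) := min'_mem _ hWgtne
    rw [mem_filter] at hu2mem
    obtain ⟨hu2W, hxu2⟩ := hu2mem
    have hu2start : u2 - 1 ∉ W := by
      intro hin
      have h1 : x ≤ u2 - 1 := by omega
      rcases Nat.eq_or_lt_of_le h1 with he | hl
      · exact hxW (he ▸ hin)
      · have : u2 - 1 ∈ W.filter (x < ·) := mem_filter.2 ⟨hin, hl⟩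
        have := min'_le _ _ this
        omega
    have hu2E : u2 ∈ EW t W := by
      rw [EW, mem_union]
      exact Or.inl (mem_filter.2 ⟨hu2W, hu2start⟩)
    have hle1 : u ≤ u2 := min'_le _ _ (mem_filter.2 ⟨hu2E, hxu2⟩)
    have hle2 : u2 ≤ j := min'_le _ _ (mem_filter.2 ⟨hj, hxj⟩)
    omega
  have hpx : prevM W u < x := by
    by_cases hne3 : (W.filter (· < u)).Nonempty
    · obtain ⟨hm, hl⟩ := prevM_mem hne3
      exact claim _ hm hl
    · rw [prevM, dif_neg hne3]; omega
  exact mem_biUnion.2 ⟨u, huE, mem_Ioo.2 ⟨hpx, hxu⟩⟩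

lemma bigGap {t B m K w : ℕ} {W : Finset ℕ} (hW : W ⊆ Finset.Icc 1 t) (hcard : W.card = w)
    (hwK : w ≤ K) (harith : 2 * ((K + 1) * (3 * B * m)) ≤ t) (hKt : 2 * K < t) :
    ∃ y0 ∈ EW t W, prevM W y0 + 3 * B * m + 2 ≤ y0 := by
  by_contra hc
  push_neg at hc
  have h1 : (Finset.Icc 1 t \ W).card ≤ ∑ u ∈ EW t W, (Finset.Ioo (prevM W u) u).card :=
    le_trans (card_le_card (cover hW)) (card_biUnion_le)
  have h2 : ∀ u ∈ EW t W, (Finset.Ioo (prevM W u) u).card ≤ 3 * B * m := by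
    intro u hu
    rw [Nat.card_Ioo]
    have := hc u hu
    omega
  have h3 : ∑ u ∈ EW t W, (Finset.Ioo (prevM W u) u).card ≤ (EW t W).card * (3 * B * m) := by
    have := Finset.sum_le_card_nsmul (EW t W) _ (3 * B * m) h2
    simpa [smul_eq_mul] using this
  have h4 : (EW t W).card ≤ w + 1 := by
    have ha : (EW t W).card ≤ (W.filter (fun s => s - 1 ∉ W)).card + 1 := by
      simpa [EW] using card_union_le (W.filter (fun s => s - 1 ∉ W)) {t + 1}
    have hb : (W.filter (fun s => s - 1 ∉ W)).card ≤ W.card := card_le_card (filter_subset _ _)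
    omega
  have h5 : (Finset.Icc 1 t \ W).card = t - w := by
    rw [card_sdiff_of_subset hW, Nat.card_Icc, hcard]
    omega
  have h6 : (EW t W).card * (3 * B * m) ≤ (K + 1) * (3 * B * m) :=
    Nat.mul_le_mul_right _ (by omega)
  have h7 : t - w ≤ (K + 1) * (3 * B * m) := by omega
  revert h7 harith hKt hwK
  generalize (K + 1) * (3 * B * m) = Q
  intro h7 harith hKt hwK
  omega

end ScatterAux

namespace ScatterAux

noncomputable def S0 (B : ℕ) (W : Finset ℕ) : ℕ :=
  if h : (defStarts B W).Nonempty then (defStarts B W).max' h else 0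

noncomputable def Y0 (t B m : ℕ) (W : Finset ℕ) : ℕ :=
  if h : ((EW t W).filter (fun u => prevM W u + 3 * B * m + 2 ≤ u)).Nonempty
  then ((EW t W).filter (fun u => prevM W u + 3 * B * m + 2 ≤ u)).min' h else 0

lemma gap_unique {B a1 a2 c1 c2 : ℕ} (h1 : 2 ≤ a1) (h2 : a1 ≤ 3 * B)
    (h3 : 2 ≤ a2) (h4 : a2 ≤ 3 * B) (he : a1 + 3 * B * c1 = a2 + 3 * B * c2) : c1 = c2 := by
  rcases Nat.lt_trichotomy c1 c2 with hl | he' | hg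
  · exfalso
    have hx : 3 * B * (c1 + 1) ≤ 3 * B * c2 := Nat.mul_le_mul_left _ (by omega)
    rw [Nat.mul_add, Nat.mul_one] at hx
    revert h1 h2 h3 h4 he hx
    generalize 3 * B * c1 = X
    generalize 3 * B * c2 = Y
    generalize 3 * B = Z
    intros; omega
  · exact he'
  · exfalso
    have hx : 3 * B * (c2 + 1) ≤ 3 * B * c1 := Nat.mul_le_mul_left _ (by omega)
    rw [Nat.mul_add, Nat.mul_one] at hx
    revert h1 h2 h3 h4 he hx
    generalize 3 * B * c1 = X
    generalize 3 * B * c2 = Y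
    generalize 3 * B = Z
    intros; omega

lemma build {t B m c K : ℕ} {W : Finset ℕ} (hW : W ⊆ Finset.Icc 1 t) (hwK : W.card ≤ K)
    (hB : 1 ≤ B) (hc1 : 1 ≤ c) (hcm : c ≤ m) (hdef : (defStarts B W).Nonempty)
    (harith : 2 * ((K + 1) * (3 * B * m)) ≤ t) (hKt : 2 * K < t) :
    Ctx t B m c (S0 B W) (Y0 t B m W) W ∧ S0 B W ∈ defStarts B W ∧ S0 B W ∈ EW t W ∧
      Y0 t B m W ∈ EW t W := by
  have hs0 : S0 B W ∈ defStarts B W := by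
    rw [S0, dif_pos hdef]; exact max'_mem _ hdef
  have hs0' := mem_filter.1 hs0
  obtain ⟨hs0W, hrest⟩ := hs0'
  obtain ⟨hs0p, j, hjW, hjlt, hjle⟩ := hrest
  have hpne : (W.filter (· < S0 B W)).Nonempty := ⟨j, mem_filter.2 ⟨hjW, hjlt⟩⟩
  obtain ⟨hpW, hplt⟩ := prevM_mem hpne
  have hjp : j ≤ prevM W (S0 B W) := le_prevM hjW hjlt
  have hj1 : 1 ≤ j := (mem_Icc.1 (hW hjW)).1
  have hgap1 : prevM W (S0 B W) + 2 ≤ S0 B W := by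
    have hne1 : prevM W (S0 B W) ≠ S0 B W - 1 := fun e => hs0p (e ▸ hpW)
    omega
  have hgap2 : S0 B W ≤ prevM W (S0 B W) + 3 * B := by omega
  obtain ⟨y, hyE, hygap⟩ := bigGap hW rfl hwK harith hKt
  have hfne : ((EW t W).filter (fun u => prevM W u + 3 * B * m + 2 ≤ u)).Nonempty :=
    ⟨y, mem_filter.2 ⟨hyE, hygap⟩⟩
  have hy0m : Y0 t B m W ∈ (EW t W).filter (fun u => prevM W u + 3 * B * m + 2 ≤ u) := by
    rw [Y0, dif_pos hfne]; exact min'_mem _ hfne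
  rw [mem_filter] at hy0m
  obtain ⟨hy0E, hy0gap⟩ := hy0m
  have hy0cases := mem_EW hy0E
  refine ⟨⟨hW, hB, hc1, hcm, hs0W, hs0p, hgap1, hgap2, hpW, ?_, hy0gap, ?_⟩, hs0, ?_, hy0E⟩
  · rcases hy0cases with h1 | h1
    · exact Or.inl h1.1
    · exact Or.inr h1
  · rcases hy0cases with h1 | h1
    · exact le_trans (mem_Icc.1 (hW h1.1)).2 (by omega)
    · omega
  · rw [EW, mem_union]
    exact Or.inl (mem_filter.2 ⟨hs0W, hs0p⟩)

lemma step {K t B w r m k : ℕ} (hB : 1 ≤ B) (hwK : w ≤ K) (hm1 : 1 ≤ m)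
    (harith : 2 * ((K + 1) * (3 * B * m)) ≤ t) (hKt : 2 * K < t) :
    (((Finset.Icc 1 t).powerset.filter
        (fun W => (W.card = w ∧ runCount W = r) ∧ k + 1 ≤ defCount B W)).card) * m ≤
      ((K + 2) * (K + 2)) *
      (((Finset.Icc 1 t).powerset.filter
        (fun W => (W.card = w ∧ runCount W = r) ∧ k ≤ defCount B W)).card) := by
  classical
  set A := (Finset.Icc 1 t).powerset.filter
    (fun W => (W.card = w ∧ runCount W = r) ∧ k + 1 ≤ defCount B W) with hA
  set A' := (Finset.Icc 1 t).powerset.filter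
    (fun W => (W.card = w ∧ runCount W = r) ∧ k ≤ defCount B W) with hA'
  have key : (A ×ˢ Finset.Icc 1 m).card ≤
      (A' ×ˢ (Finset.range (K + 2) ×ˢ Finset.range (K + 2))).card := by
    apply Finset.card_le_card_of_injOn
      (fun p => (p.1.image (fmap (3 * B * p.2) (S0 B p.1) (Y0 t B m p.1)),
        (rank (EW t p.1) (S0 B p.1), rank (EW t p.1) (Y0 t B m p.1))))
    · -- maps to
      rintro ⟨W, c⟩ hp
      rw [Finset.mem_coe, mem_product] at hp
      dsimp only at hp ⊢
      obtain ⟨hWA, hc⟩ := hp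
      rw [hA, mem_filter, mem_powerset] at hWA
      obtain ⟨hWt, ⟨hcard, hrun⟩, hdefc⟩ := hWA
      rw [mem_Icc] at hc
      have hdefeq : defCount B W = (defStarts B W).card := rfl
      have hdef : (defStarts B W).Nonempty := by
        rw [← card_pos]
        omega
      obtain ⟨ctx, hs0d, hs0E, hy0E⟩ :=
        build hWt (hcard ▸ hwK) hB hc.1 hc.2 hdef harith hKt
      rw [Finset.mem_coe, mem_product, mem_product]
      dsimp only
      refine ⟨?_, ?_, ?_⟩
      · rw [hA', mem_filter, mem_powerset]
        refine ⟨ctx.image_subset_Icc, ⟨?_, ?_⟩, ?_⟩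
        · rw [ctx.image_card]; exact hcard
        · rw [ctx.runCount_image]; exact hrun
        · have := ctx.defCount_image hs0d
          omega
      · rw [mem_range]
        have h1 := rank_lt (t := t) (W := W) (S0 B W)
        omega
      · rw [mem_range]
        have h1 := rank_lt (t := t) (W := W) (Y0 t B m W)
        omega
    · -- injective
      rintro ⟨W1, c1⟩ hp1 ⟨W2, c2⟩ hp2 heq
      rw [Finset.mem_coe, mem_product] at hp1 hp2
      dsimp only at hp1 hp2 heq
      obtain ⟨hW1A, hc1'⟩ := hp1
      obtain ⟨hW2A, hc2'⟩ := hp2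
      rw [hA, mem_filter, mem_powerset] at hW1A hW2A
      obtain ⟨hW1t, ⟨hcard1, hrun1⟩, hdefc1⟩ := hW1A
      obtain ⟨hW2t, ⟨hcard2, hrun2⟩, hdefc2⟩ := hW2A
      rw [mem_Icc] at hc1' hc2'
      have hdefeq1 : defCount B W1 = (defStarts B W1).card := rfl
      have hdefeq2 : defCount B W2 = (defStarts B W2).card := rfl
      have hdef1 : (defStarts B W1).Nonempty := by rw [← card_pos]; omega
      have hdef2 : (defStarts B W2).Nonempty := by rw [← card_pos]; omega
      obtain ⟨ctx1, hs0d1, hs0E1, hy0E1⟩ :=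
        build hW1t (hcard1 ▸ hwK) hB hc1'.1 hc1'.2 hdef1 harith hKt
      obtain ⟨ctx2, hs0d2, hs0E2, hy0E2⟩ :=
        build hW2t (hcard2 ▸ hwK) hB hc2'.1 hc2'.2 hdef2 harith hKt
      simp only [Prod.mk.injEq] at heq
      obtain ⟨hX, hrs, hry⟩ := heq
      set F1 := fmap (3 * B * c1) (S0 B W1) (Y0 t B m W1) with hF1
      set F2 := fmap (3 * B * c2) (S0 B W2) (Y0 t B m W2) with hF2
      have hs1X : F1 (S0 B W1) ∈ EW t (W1.image F1) := by
        rw [ctx1.EW_image]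
        exact mem_image_of_mem _ hs0E1
      have hy1X : F1 (Y0 t B m W1) ∈ EW t (W1.image F1) := by
        rw [ctx1.EW_image]
        exact mem_image_of_mem _ hy0E1
      have hs2X : F2 (S0 B W2) ∈ EW t (W1.image F1) := by
        rw [hX, ctx2.EW_image]
        exact mem_image_of_mem _ hs0E2
      have hy2X : F2 (Y0 t B m W2) ∈ EW t (W1.image F1) := by
        rw [hX, ctx2.EW_image]
        exact mem_image_of_mem _ hy0E2
      have hseq : F1 (S0 B W1) = F2 (S0 B W2) := by
        apply rank_injOn hs1X hs2X
        have e1 : rank (EW t (W1.image F1)) (F1 (S0 B W1)) = rank (EW t W1) (S0 B W1) :=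
          ctx1.rank_image hs0E1
        have e2 : rank (EW t (W2.image F2)) (F2 (S0 B W2)) = rank (EW t W2) (S0 B W2) :=
          ctx2.rank_image hs0E2
        rw [← hX] at e2
        rw [e1, e2, hrs]
      have hyeq : F1 (Y0 t B m W1) = F2 (Y0 t B m W2) := by
        apply rank_injOn hy1X hy2X
        have e1 : rank (EW t (W1.image F1)) (F1 (Y0 t B m W1)) = rank (EW t W1) (Y0 t B m W1) :=
          ctx1.rank_image hy0E1
        have e2 : rank (EW t (W2.image F2)) (F2 (Y0 t B m W2)) = rank (EW t W2) (Y0 t B m W2) :=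
          ctx2.rank_image hy0E2
        rw [← hX] at e2
        rw [e1, e2, hry]
      have hceq : c1 = c2 := by
        have g1 := ctx1.gap_image_s0
        have g2 := ctx2.gap_image_s0
        have p1 := ctx1.prevM_image_s0
        have p2 := ctx2.prevM_image_s0
        rw [← hF1] at g1 p1
        rw [← hF2] at g2 p2
        have hprev : F1 (prevM W1 (S0 B W1)) = F2 (prevM W2 (S0 B W2)) := by
          rw [← p1, ← p2, hseq, hX]
        have e : F1 (prevM W1 (S0 B W1)) + ((S0 B W1 - prevM W1 (S0 B W1)) + 3 * B * c1) =
            F1 (prevM W1 (S0 B W1)) + ((S0 B W2 - prevM W2 (S0 B W2)) + 3 * B * c2) := by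
          rw [← add_assoc, ← add_assoc, ← g1, hprev, ← g2, hseq]
        have e' := Nat.add_left_cancel e
        have ha1 := ctx1.hs0gap1
        have ha2 := ctx1.hs0gap2
        have hb1 := ctx2.hs0gap1
        have hb2 := ctx2.hs0gap2
        exact gap_unique (by omega) (by omega) (by omega) (by omega) e'
      have hrec1 : (W1.image F1).image
          (fmap (3 * B * c1) (F1 (Y0 t B m W1)) (F1 (S0 B W1))) = W1 := by
        rw [image_image]
        have h1 : ∀ x ∈ W1,
            (fmap (3 * B * c1) (F1 (Y0 t B m W1)) (F1 (S0 B W1)) ∘ F1) x = id x :=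
          fun x hx => ctx1.recover hx
        exact Eq.trans (Finset.image_congr h1) image_id
      have hrec2 : (W2.image F2).image
          (fmap (3 * B * c2) (F2 (Y0 t B m W2)) (F2 (S0 B W2))) = W2 := by
        rw [image_image]
        have h1 : ∀ x ∈ W2,
            (fmap (3 * B * c2) (F2 (Y0 t B m W2)) (F2 (S0 B W2)) ∘ F2) x = id x :=
          fun x hx => ctx2.recover hx
        exact Eq.trans (Finset.image_congr h1) image_id
      have hW12 : W1 = W2 := by
        rw [← hrec1, ← hrec2, hX, hceq, hseq, hyeq]
      exact Prod.ext hW12 hceq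
  rw [card_product, card_product, card_product, Nat.card_Icc] at key
  simp only [Finset.card_range, Nat.add_sub_cancel] at key
  exact le_trans key (le_of_eq (Nat.mul_comm _ _))

end ScatterAux

end

/-- **Lemma 14.** For fixed `K` and `q` there is a constant `C > 0` such that for all
`t, B ≥ 1` and `1 ≤ r ≤ w ≤ min(K, t)`, a uniformly random subset of `[t]` of size `w`
with exactly `r` runs has at least `q` `B`-defective runs with probability at most
`C·(B/t)^q`. -/
theorem scattered (K q : ℕ) (hK : 1 ≤ K) :
    ∃ C : ℝ, 0 < C ∧
      ∀ t B r w : ℕ, 1 ≤ t → 1 ≤ B → 1 ≤ r → r ≤ w → w ≤ K → w ≤ t →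
        ((((Finset.Icc 1 t).powerset).filter
              (fun W => (W.card = w ∧ runCount W = r) ∧ q ≤ defCount B W)).card : ℝ) /
            ((((Finset.Icc 1 t).powerset).filter
              (fun W => W.card = w ∧ runCount W = r)).card : ℝ) ≤
          C * ((B : ℝ) / (t : ℝ)) ^ q := by
  classical
  refine ⟨(((K : ℝ) + 2) * ((K : ℝ) + 2)) ^ q * (12 * ((K : ℝ) + 1)) ^ q
      + (12 * ((K : ℝ) + 1)) ^ q, by positivity, ?_⟩
  intro t B r w ht hB hr hrw hwK hwt
  set C1 : ℝ := (((K : ℝ) + 2) * ((K : ℝ) + 2)) ^ q * (12 * ((K : ℝ) + 1)) ^ q with hC1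
  set C2 : ℝ := (12 * ((K : ℝ) + 1)) ^ q with hC2
  have hC1pos : (0:ℝ) ≤ C1 := by rw [hC1]; positivity
  have hC2pos : (0:ℝ) ≤ C2 := by rw [hC2]; positivity
  set Nset : ℕ → Finset (Finset ℕ) := fun j => (Finset.Icc 1 t).powerset.filter
      (fun W => (W.card = w ∧ runCount W = r) ∧ j ≤ defCount B W) with hNset
  set G := (Finset.Icc 1 t).powerset.filter (fun W => W.card = w ∧ runCount W = r) with hG
  have hgoal : ((Nset q).card : ℝ) / (G.card : ℝ) ≤ (C1 + C2) * ((B : ℝ) / (t : ℝ)) ^ q →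
      (((((Finset.Icc 1 t).powerset).filter
            (fun W => (W.card = w ∧ runCount W = r) ∧ q ≤ defCount B W)).card : ℝ) /
          ((((Finset.Icc 1 t).powerset).filter
            (fun W => W.card = w ∧ runCount W = r)).card : ℝ) ≤
        (C1 + C2) * ((B : ℝ) / (t : ℝ)) ^ q) := fun h => h
  apply hgoal
  have hsub : Nset q ⊆ G := by
    intro W hW
    rw [hNset, Finset.mem_filter] at hW
    rw [hG, Finset.mem_filter]
    exact ⟨hW.1, hW.2.1⟩
  have hNG : (Nset q).card ≤ G.card := Finset.card_le_card hsub
  have htR : (0:ℝ) < (t : ℝ) := by exact_mod_cast ht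
  have hBR : (0:ℝ) < (B : ℝ) := by exact_mod_cast hB
  by_cases hGz : G.card = 0
  · have hz : (Nset q).card = 0 := by omega
    rw [hz]
    simp only [Nat.cast_zero, zero_div]
    positivity
  have hgpos : (0:ℝ) < (G.card : ℝ) := by
    exact_mod_cast Nat.pos_of_ne_zero hGz
  rw [div_le_iff₀ hgpos]
  by_cases hreg : 12 * B * (K + 1) ≤ t
  · -- hard regime
    set m := t / (6 * B * (K + 1)) with hm
    have hdpos : 0 < 6 * B * (K + 1) := by positivity
    have hm2 : 2 ≤ m := by
      rw [hm, Nat.le_div_iff_mul_le hdpos]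
      calc 2 * (6 * B * (K + 1)) = 12 * B * (K + 1) := by ring
        _ ≤ t := hreg
    have hm1 : 1 ≤ m := by omega
    have hdm : 6 * B * (K + 1) * m ≤ t := by
      rw [hm, Nat.mul_comm]
      exact Nat.div_mul_le_self t _
    have harith : 2 * ((K + 1) * (3 * B * m)) ≤ t := by
      have he : 2 * ((K + 1) * (3 * B * m)) = 6 * B * (K + 1) * m := by ring
      rw [he]; exact hdm
    have hKt : 2 * K < t := by
      have h12 : 12 * (K + 1) ≤ 12 * B * (K + 1) := by
        have h13 : 12 * 1 ≤ 12 * B := Nat.mul_le_mul_left 12 hB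
        have := Nat.mul_le_mul_right (K + 1) h13
        simpa using this
      omega
    have iter : ∀ j : ℕ, (Nset j).card * m ^ j ≤ ((K + 2) * (K + 2)) ^ j * G.card := by
      intro j
      induction j with
      | zero =>
        have he : Nset 0 = G := by
          rw [hNset, hG]
          apply Finset.filter_congr
          intro W _
          simp
        rw [he]
        simp
      | succ j ih =>
        have hstep : (Nset (j + 1)).card * m ≤ ((K + 2) * (K + 2)) * (Nset j).card :=
          ScatterAux.step (K := K) (t := t) (B := B) (w := w) (r := r) (m := m) (k := j)
            hB hwK hm1 harith hKt
        calc (Nset (j + 1)).card * m ^ (j + 1)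
            = ((Nset (j + 1)).card * m) * m ^ j := by rw [pow_succ]; ring
          _ ≤ (((K + 2) * (K + 2)) * (Nset j).card) * m ^ j :=
              Nat.mul_le_mul_right _ hstep
          _ = ((K + 2) * (K + 2)) * ((Nset j).card * m ^ j) := by ring
          _ ≤ ((K + 2) * (K + 2)) * (((K + 2) * (K + 2)) ^ j * G.card) :=
              Nat.mul_le_mul_left _ ih
          _ = ((K + 2) * (K + 2)) ^ (j + 1) * G.card := by rw [pow_succ]; ring
    have key := iter q
    have hmt : t ≤ 12 * B * (K + 1) * m := by
      have h1 := Nat.div_add_mod t (6 * B * (K + 1))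
      rw [← hm] at h1
      have h2 : t % (6 * B * (K + 1)) < 6 * B * (K + 1) := Nat.mod_lt _ hdpos
      have h3 : 6 * B * (K + 1) ≤ 6 * B * (K + 1) * m :=
        Nat.le_mul_of_pos_right _ (by omega)
      have h4 : 12 * B * (K + 1) * m = 6 * B * (K + 1) * m + 6 * B * (K + 1) * m := by ring
      revert h1 h2 h3 h4
      generalize 6 * B * (K + 1) * m = e
      generalize 12 * B * (K + 1) * m = f
      generalize 6 * B * (K + 1) = d
      intros h1 h2 h3 h4
      omega
    have keyR : ((Nset q).card : ℝ) * (m : ℝ) ^ q ≤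
        (((K : ℝ) + 2) * ((K : ℝ) + 2)) ^ q * (G.card : ℝ) := by
      exact_mod_cast key
    have hmR : (0:ℝ) < (m : ℝ) := by exact_mod_cast (by omega : 0 < m)
    have hmtR : (t : ℝ) ≤ 12 * (B : ℝ) * ((K : ℝ) + 1) * (m : ℝ) := by
      exact_mod_cast hmt
    have hone : (1:ℝ) ≤ 12 * ((K : ℝ) + 1) * ((B : ℝ) / (t : ℝ)) * (m : ℝ) := by
      have he : 12 * ((K : ℝ) + 1) * ((B : ℝ) / (t : ℝ)) * (m : ℝ)
          = (12 * (B : ℝ) * ((K : ℝ) + 1) * (m : ℝ)) / (t : ℝ) := by ring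
      rw [he, le_div_iff₀ htR, one_mul]
      exact hmtR
    have hchain : ((Nset q).card : ℝ) * (m : ℝ) ^ q ≤
        (C1 * ((B : ℝ) / (t : ℝ)) ^ q * (G.card : ℝ)) * (m : ℝ) ^ q := by
      calc ((Nset q).card : ℝ) * (m : ℝ) ^ q
          ≤ (((K : ℝ) + 2) * ((K : ℝ) + 2)) ^ q * (G.card : ℝ) := keyR
        _ = ((((K : ℝ) + 2) * ((K : ℝ) + 2)) ^ q * (G.card : ℝ)) * 1 ^ q := by
            rw [one_pow, mul_one]
        _ ≤ ((((K : ℝ) + 2) * ((K : ℝ) + 2)) ^ q * (G.card : ℝ)) *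
              (12 * ((K : ℝ) + 1) * ((B : ℝ) / (t : ℝ)) * (m : ℝ)) ^ q := by
            apply mul_le_mul_of_nonneg_left (pow_le_pow_left₀ (by norm_num) hone q)
            positivity
        _ = (C1 * ((B : ℝ) / (t : ℝ)) ^ q * (G.card : ℝ)) * (m : ℝ) ^ q := by
            have hmp : (12 * ((K : ℝ) + 1) * ((B : ℝ) / (t : ℝ)) * (m : ℝ)) ^ q
                = (12 * ((K : ℝ) + 1)) ^ q * ((B : ℝ) / (t : ℝ)) ^ q * (m : ℝ) ^ q := by
              rw [mul_pow, mul_pow]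
            rw [hmp, hC1]
            ring
    have hfin : ((Nset q).card : ℝ) ≤ C1 * ((B : ℝ) / (t : ℝ)) ^ q * (G.card : ℝ) :=
      le_of_mul_le_mul_right hchain (by positivity)
    have h0 : (0:ℝ) ≤ C2 * ((B : ℝ) / (t : ℝ)) ^ q * (G.card : ℝ) := by positivity
    nlinarith [hfin, h0]
  · -- easy regime
    push_neg at hreg
    have hup : ((Nset q).card : ℝ) ≤ (G.card : ℝ) := by exact_mod_cast hNG
    have hone : (1:ℝ) ≤ 12 * ((K : ℝ) + 1) * ((B : ℝ) / (t : ℝ)) := by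
      have h1R : (t : ℝ) ≤ 12 * (B : ℝ) * ((K : ℝ) + 1) := by
        exact_mod_cast le_of_lt hreg
      have he : 12 * ((K : ℝ) + 1) * ((B : ℝ) / (t : ℝ))
          = (12 * (B : ℝ) * ((K : ℝ) + 1)) / (t : ℝ) := by ring
      rw [he, le_div_iff₀ htR, one_mul]
      exact h1R
    have hC2' : (1:ℝ) ≤ C2 * ((B : ℝ) / (t : ℝ)) ^ q := by
      calc (1:ℝ) = 1 ^ q := (one_pow q).symm
        _ ≤ (12 * ((K : ℝ) + 1) * ((B : ℝ) / (t : ℝ))) ^ q :=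
            pow_le_pow_left₀ (by norm_num) hone q
        _ = C2 * ((B : ℝ) / (t : ℝ)) ^ q := by rw [hC2]; rw [mul_pow]
    have h0 : (0:ℝ) ≤ C1 * ((B : ℝ) / (t : ℝ)) ^ q * (G.card : ℝ) := by positivity
    nlinarith [hup, hC2', hgpos, h0]
end

section
/- Let H be a finite simple graph with ℓ ≥ 1 edges. Suppose there exist walks p_1, ..., p_r in H whose lengths (number of edge-traversals, counted with multiplicity) sum to w, such that every edge of H is traversed by at least one of the walks p_i. Then ρ(H) ≤ r + w - ℓ; that is, the edge set of H can be partitioned into at most r + w - ℓ pairwise edge-disjoint trails. -/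
open Filter
open scoped Classical

section AuxTrail

open SimpleGraph

variable {α : Type} [Fintype α]

private lemma aux1 {H : SimpleGraph α} {u v : α} (p : H.Walk u v) (S : Finset (Sym2 α)) :
    ∃ (x : α) (t : H.Walk u x) (T : List (Σ a : α, Σ b : α, H.Walk a b)),
      (∀ P ∈ (⟨u, x, t⟩ :: T : List (Σ a : α, Σ b : α, H.Walk a b)), P.2.2.IsTrail) ∧
      ((⟨u, x, t⟩ :: T : List (Σ a : α, Σ b : α, H.Walk a b)).Pairwise
        (fun P Q => ∀ e ∈ P.2.2.edges, e ∉ Q.2.2.edges)) ∧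
      (∀ P ∈ (⟨u, x, t⟩ :: T : List (Σ a : α, Σ b : α, H.Walk a b)),
        ∀ e ∈ P.2.2.edges, e ∉ S) ∧
      (∀ e, (∃ P ∈ (⟨u, x, t⟩ :: T : List (Σ a : α, Σ b : α, H.Walk a b)),
        e ∈ P.2.2.edges) ↔ e ∈ p.edges ∧ e ∉ S) ∧
      (T.length + 1) + (p.edges.toFinset \ S).card ≤ 1 + p.length := by
  induction p generalizing S with
  | nil =>
    refine ⟨_, .nil, [], ?_, ?_, ?_, ?_, ?_⟩ <;> simp
  | @cons a b c h p ih =>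
    by_cases he : s(a, b) ∈ S
    · obtain ⟨x, t, T, htr, hpw, hS, hun, hcard⟩ := ih S
      refine ⟨a, .nil, ⟨b, x, t⟩ :: T, ?_, ?_, ?_, ?_, ?_⟩
      · intro P hP
        rcases List.mem_cons.mp hP with hP | hP
        · subst hP; exact .nil
        · exact htr P hP
      · refine List.Pairwise.cons ?_ hpw
        intro Q hQ e hmem
        simp at hmem
      · intro P hP e heP
        rcases List.mem_cons.mp hP with hP | hP
        · subst hP; simp at heP
        · exact hS P hP e heP
      · intro e
        have h1 := hun e
        constructor
        · rintro ⟨P, hP, heP⟩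
          rcases List.mem_cons.mp hP with hP | hP
          · subst hP; simp at heP
          · have := h1.mp ⟨P, hP, heP⟩
            exact ⟨by simp [this.1], this.2⟩
        · rintro ⟨hem, hes⟩
          rw [SimpleGraph.Walk.edges_cons] at hem
          rcases List.mem_cons.mp hem with rfl | hem
          · exact absurd he hes
          · obtain ⟨P, hP, heP⟩ := h1.mpr ⟨hem, hes⟩
            exact ⟨P, List.mem_cons_of_mem _ hP, heP⟩
      · have hset : (Walk.cons h p).edges.toFinset \ S = p.edges.toFinset \ S := by
          ext e
          simp only [SimpleGraph.Walk.edges_cons, List.toFinset_cons, Finset.mem_sdiff,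
            Finset.mem_insert, List.mem_toFinset]
          constructor
          · rintro ⟨rfl | hm, hs⟩
            · exact absurd he hs
            · exact ⟨hm, hs⟩
          · rintro ⟨hm, hs⟩; exact ⟨Or.inr hm, hs⟩
        rw [hset]
        simp only [SimpleGraph.Walk.length_cons, List.length_cons]
        omega
    · obtain ⟨x, t, T, htr, hpw, hS, hun, hcard⟩ := ih (insert s(a, b) S)
      have het : s(a, b) ∉ t.edges := by
        intro hc
        exact hS ⟨b, x, t⟩ (List.mem_cons_self) _ hc (Finset.mem_insert_self _ _)
      refine ⟨x, .cons h t, T, ?_, ?_, ?_, ?_, ?_⟩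
      · intro P hP
        rcases List.mem_cons.mp hP with hP | hP
        · subst hP
          exact (SimpleGraph.Walk.isTrail_cons h t).mpr
            ⟨htr ⟨b, x, t⟩ (List.mem_cons_self), het⟩
        · exact htr P (List.mem_cons_of_mem _ hP)
      · rcases hpw with _ | ⟨hd, hpw'⟩
        refine List.Pairwise.cons ?_ hpw'
        intro Q hQ e heP
        rw [SimpleGraph.Walk.edges_cons] at heP
        rcases List.mem_cons.mp heP with rfl | heP
        · intro hc
          exact hS Q (List.mem_cons_of_mem _ hQ) _ hc (Finset.mem_insert_self _ _)
        · exact hd Q hQ e heP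
      · intro P hP e heP
        rcases List.mem_cons.mp hP with hP | hP
        · subst hP
          rw [SimpleGraph.Walk.edges_cons] at heP
          rcases List.mem_cons.mp heP with rfl | heP
          · exact he
          · exact fun hc => hS ⟨b, x, t⟩ (List.mem_cons_self) _ heP
              (Finset.mem_insert_of_mem hc)
        · exact fun hc => hS P (List.mem_cons_of_mem _ hP) _ heP
            (Finset.mem_insert_of_mem hc)
      · intro e
        constructor
        · rintro ⟨P, hP, heP⟩
          rcases List.mem_cons.mp hP with hP | hP
          · subst hP
            rw [SimpleGraph.Walk.edges_cons] at heP
            rcases List.mem_cons.mp heP with rfl | heP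
            · exact ⟨by simp, he⟩
            · have := hun e |>.mp ⟨⟨b, x, t⟩, List.mem_cons_self, heP⟩
              exact ⟨by simp [this.1], fun hc => this.2 (Finset.mem_insert_of_mem hc)⟩
          · have := hun e |>.mp ⟨P, List.mem_cons_of_mem _ hP, heP⟩
            exact ⟨by simp [this.1], fun hc => this.2 (Finset.mem_insert_of_mem hc)⟩
        · rintro ⟨hem, hes⟩
          rw [SimpleGraph.Walk.edges_cons] at hem
          rcases List.mem_cons.mp hem with rfl | hem
          · exact ⟨⟨a, x, .cons h t⟩, List.mem_cons_self, by simp⟩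
          · by_cases hee : e = s(a, b)
            · subst hee
              exact ⟨⟨a, x, .cons h t⟩, List.mem_cons_self, by simp⟩
            · have : e ∉ insert s(a, b) S := by
                simp only [Finset.mem_insert]; tauto
              obtain ⟨P, hP, heP⟩ := hun e |>.mpr ⟨hem, this⟩
              rcases List.mem_cons.mp hP with hP | hP
              · subst hP
                exact ⟨⟨a, x, .cons h t⟩, List.mem_cons_self,
                  by rw [SimpleGraph.Walk.edges_cons]; exact List.mem_cons_of_mem _ heP⟩
              · exact ⟨P, List.mem_cons_of_mem _ hP, heP⟩
      · have hsub : (Walk.cons h p).edges.toFinset \ S ⊆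
            insert s(a, b) (p.edges.toFinset \ insert s(a, b) S) := by
          intro e hme
          simp only [Finset.mem_sdiff, SimpleGraph.Walk.edges_cons, List.toFinset_cons,
            Finset.mem_insert, List.mem_toFinset] at hme ⊢
          rcases hme with ⟨rfl | hm, hs⟩
          · exact Or.inl rfl
          · by_cases hee : e = s(a, b)
            · exact Or.inl hee
            · exact Or.inr ⟨hm, fun hc => hc.elim hee hs⟩
        have h2 := Finset.card_le_card hsub
        have h3 := Finset.card_insert_le s(a, b) (p.edges.toFinset \ insert s(a, b) S)
        simp only [SimpleGraph.Walk.length_cons]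
        omega

private lemma aux2 {H : SimpleGraph α} (L : List (Σ a : α, Σ b : α, H.Walk a b))
    (S : Finset (Sym2 α)) :
    ∃ T : List (Σ a : α, Σ b : α, H.Walk a b),
      (∀ P ∈ T, P.2.2.IsTrail) ∧
      T.Pairwise (fun P Q => ∀ e ∈ P.2.2.edges, e ∉ Q.2.2.edges) ∧
      (∀ P ∈ T, ∀ e ∈ P.2.2.edges, e ∉ S) ∧
      (∀ e, (∃ P ∈ T, e ∈ P.2.2.edges) ↔ (∃ P ∈ L, e ∈ P.2.2.edges) ∧ e ∉ S) ∧
      T.length + (Finset.univ.filter fun e => (∃ P ∈ L, e ∈ P.2.2.edges) ∧ e ∉ S).card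
        ≤ L.length + (L.map fun P => P.2.2.length).sum := by
  induction L generalizing S with
  | nil =>
    refine ⟨[], by simp, by simp, by simp, by simp, ?_⟩
    simp
  | cons P₀ L' ih =>
    obtain ⟨a, b, p⟩ := P₀
    obtain ⟨x, t, T₁, htr₁, hpw₁, hS₁, hun₁, hcard₁⟩ := aux1 p S
    obtain ⟨T₂, htr₂, hpw₂, hS₂, hun₂, hcard₂⟩ := ih (S ∪ p.edges.toFinset)
    refine ⟨(⟨a, x, t⟩ :: T₁) ++ T₂, ?_, ?_, ?_, ?_, ?_⟩
    · intro P hP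
      rcases List.mem_append.mp hP with hP | hP
      · exact htr₁ P hP
      · exact htr₂ P hP
    · rw [List.pairwise_append]
      refine ⟨hpw₁, hpw₂, ?_⟩
      intro P hP Q hQ e heP hc
      have h1 := (hun₁ e).mp ⟨P, hP, heP⟩
      exact hS₂ Q hQ e hc (Finset.mem_union_right _ (List.mem_toFinset.mpr h1.1))
    · intro P hP e heP
      rcases List.mem_append.mp hP with hP | hP
      · exact hS₁ P hP e heP
      · exact fun hc => hS₂ P hP e heP (Finset.mem_union_left _ hc)
    · intro e
      constructor
      · rintro ⟨P, hP, heP⟩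
        rcases List.mem_append.mp hP with hP | hP
        · have := (hun₁ e).mp ⟨P, hP, heP⟩
          exact ⟨⟨⟨a, b, p⟩, List.mem_cons_self, this.1⟩, this.2⟩
        · have := (hun₂ e).mp ⟨P, hP, heP⟩
          obtain ⟨⟨Q, hQ, heQ⟩, hs⟩ := this
          exact ⟨⟨Q, List.mem_cons_of_mem _ hQ, heQ⟩,
            fun hc => hs (Finset.mem_union_left _ hc)⟩
      · rintro ⟨⟨Q, hQ, heQ⟩, hs⟩
        rcases List.mem_cons.mp hQ with hQ | hQ
        · subst hQ
          obtain ⟨P, hP, heP⟩ := (hun₁ e).mpr ⟨heQ, hs⟩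
          exact ⟨P, List.mem_append_left _ hP, heP⟩
        · by_cases hep : e ∈ p.edges
          · obtain ⟨P, hP, heP⟩ := (hun₁ e).mpr ⟨hep, hs⟩
            exact ⟨P, List.mem_append_left _ hP, heP⟩
          · have : e ∉ S ∪ p.edges.toFinset := by
              simp only [Finset.mem_union, List.mem_toFinset]; tauto
            obtain ⟨P, hP, heP⟩ := (hun₂ e).mpr ⟨⟨Q, hQ, heQ⟩, this⟩
            exact ⟨P, List.mem_append_right _ hP, heP⟩
    · have hdisj : Disjoint (p.edges.toFinset \ S)
          (Finset.univ.filter fun e => (∃ P ∈ L', e ∈ P.2.2.edges) ∧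
            e ∉ S ∪ p.edges.toFinset) := by
        rw [Finset.disjoint_left]
        intro e h1 h2
        simp only [Finset.mem_sdiff, List.mem_toFinset] at h1
        simp only [Finset.mem_filter, Finset.mem_union, List.mem_toFinset] at h2
        exact h2.2.2 (Or.inr h1.1)
      have hsplit : (Finset.univ.filter fun e =>
          (∃ P ∈ (⟨a, b, p⟩ :: L' : List (Σ a : α, Σ b : α, H.Walk a b)),
            e ∈ P.2.2.edges) ∧ e ∉ S) =
          (p.edges.toFinset \ S) ∪
          (Finset.univ.filter fun e => (∃ P ∈ L', e ∈ P.2.2.edges) ∧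
            e ∉ S ∪ p.edges.toFinset) := by
        ext e
        simp only [Finset.mem_filter, Finset.mem_union, Finset.mem_sdiff,
          List.mem_toFinset, Finset.mem_univ, true_and]
        constructor
        · rintro ⟨⟨Q, hQ, heQ⟩, hs⟩
          rcases List.mem_cons.mp hQ with hQ | hQ
          · subst hQ; exact Or.inl ⟨heQ, hs⟩
          · by_cases hep : e ∈ p.edges
            · exact Or.inl ⟨hep, hs⟩
            · exact Or.inr ⟨⟨Q, hQ, heQ⟩, by tauto⟩
        · rintro (⟨hm, hs⟩ | ⟨⟨Q, hQ, heQ⟩, hs⟩)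
          · exact ⟨⟨⟨a, b, p⟩, List.mem_cons_self, hm⟩, hs⟩
          · exact ⟨⟨Q, List.mem_cons_of_mem _ hQ, heQ⟩, fun hc => hs (by simp [hc])⟩
      rw [hsplit, Finset.card_union_of_disjoint hdisj]
      simp only [List.length_append, List.length_cons, List.map_cons, List.sum_cons]
      omega

end AuxTrail

/-- **Claim 15 (within the proof of the key lemma).** If the edges of `H` (a graph with
`ℓ ≥ 1` edges) are covered by `r` walks of total length `w`, then `H` admits a decomposition
into at most `r + w - ℓ` pairwise edge-disjoint trails, i.e. `ρ(H) + ℓ ≤ r + w`. -/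
theorem walks_cover_trail_decomp {α : Type} [Fintype α] (H : SimpleGraph α)
    (ℓ : ℕ) (hℓ : ℓ = H.edgeSet.ncard) (hℓ1 : 1 ≤ ℓ)
    (L : List (Σ u : α, Σ v : α, H.Walk u v)) (r w : ℕ)
    (hr : r = L.length)
    (hw : w = (L.map (fun P => P.2.2.length)).sum)
    (hcover : ∀ e ∈ H.edgeSet, ∃ P ∈ L, e ∈ P.2.2.edges) :
    trailDecompNumber H + ℓ ≤ r + w := by
  classical
  obtain ⟨T, htr, hpw, hS, hun, hcard⟩ := aux2 L (∅ : Finset (Sym2 α))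
  have hiff : ∀ e, e ∈ H.edgeSet ↔ ∃ P ∈ T, e ∈ P.2.2.edges := by
    intro e
    constructor
    · intro he
      exact (hun e).mpr ⟨hcover e he, Finset.notMem_empty e⟩
    · rintro ⟨P, hP, heP⟩
      obtain ⟨⟨Q, hQ, heQ⟩, -⟩ := (hun e).mp ⟨P, hP, heP⟩
      exact Q.2.2.edges_subset_edgeSet heQ
  have hmem : trailDecompNumber H ≤ T.length := by
    apply Nat.sInf_le
    exact ⟨T, rfl, htr, hpw, hiff⟩
  have hfe : (Finset.univ.filter fun e => (∃ P ∈ L, e ∈ P.2.2.edges) ∧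
      e ∉ (∅ : Finset (Sym2 α))) = H.edgeSet.toFinset := by
    ext e
    simp only [Finset.mem_filter, Finset.mem_univ, true_and, Finset.notMem_empty,
      not_false_iff, and_true, Set.mem_toFinset]
    constructor
    · rintro ⟨P, hP, heP⟩
      exact P.2.2.edges_subset_edgeSet heP
    · intro he
      exact hcover e he
  have hl : ℓ = H.edgeSet.toFinset.card := by
    rw [hℓ, Set.ncard_eq_toFinset_card']
  rw [hfe, ← hl] at hcard
  omega
end

section
/- Let T be a tree on at least 2 vertices with ρ(T) = ρ (so ρ ≥ 1). Let T_1 and T_2 be subgraphs of the complete graph K_n, each isomorphic to T, with V(T_1) ∩ V(T_2) ≠ ∅. Let k' = |V(T_1) ∩ V(T_2)|, let ℓ' = |E(T_1) ∩ E(T_2)|, and let ρ̂ = ρ(T_1 ∪ T_2), where T_1 ∪ T_2 is the graph with vertex set V(T_1) ∪ V(T_2) and edge set E(T_1) ∪ E(T_2). Then, as rational numbers, k' - ℓ' - 2 + ρ̂/ρ ≥ 0. -/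
open Filter
open scoped Classical

namespace IneqTreeAux
open SimpleGraph
variable {V : Type*}

/-- deleting a non-bridge edge preserves reachability -/
lemma reach_del (G : SimpleGraph V) {u w : V}
    (hr : (G \ SimpleGraph.fromEdgeSet {s(u,w)}).Reachable u w) {a b : V}
    (h : G.Reachable a b) : (G \ SimpleGraph.fromEdgeSet {s(u,w)}).Reachable a b := by
  obtain ⟨p⟩ := h
  induction p with
  | nil => exact Reachable.refl _
  | cons hadj p ih =>
    rename_i x y z
    refine Reachable.trans ?_ ih
    by_cases he : s(x,y) = s(u,w)
    · rw [Sym2.eq_iff] at he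
      rcases he with ⟨rfl, rfl⟩ | ⟨rfl, rfl⟩
      · exact hr
      · exact hr.symm
    · exact SimpleGraph.Adj.reachable (by
        simp only [SimpleGraph.sdiff_adj, SimpleGraph.fromEdgeSet_adj]
        exact ⟨hadj, by tauto⟩)

lemma ncard_edgeSet_eq [Fintype V] (G : SimpleGraph V) [Fintype G.edgeSet] :
    G.edgeSet.ncard = G.edgeFinset.card := by
  rw [← coe_edgeFinset, Set.ncard_coe_finset]

lemma conn_card_le [Fintype V] (G : SimpleGraph V) (h : G.Connected) :
    Fintype.card V ≤ G.edgeSet.ncard + 1 ∧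
      (Fintype.card V = G.edgeSet.ncard + 1 → G.IsAcyclic) := by
  classical
  generalize hm : G.edgeSet.ncard = m
  induction m using Nat.strong_induction_on generalizing G with
  | _ m ih =>
    by_cases hac : G.IsAcyclic
    · have ht : G.IsTree := ⟨h, hac⟩
      have h2 : G.edgeFinset.card + 1 = Fintype.card V := ht.card_edgeFinset
      rw [← ncard_edgeSet_eq, hm] at h2
      exact ⟨by omega, fun _ => hac⟩
    · rw [isAcyclic_iff_forall_adj_isBridge] at hac
      push_neg at hac
      obtain ⟨u, w, hadj, hnb⟩ := hac
      rw [isBridge_iff] at hnb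
      push_neg at hnb
      have hr : (G \ SimpleGraph.fromEdgeSet {s(u,w)}).Reachable u w := hnb
      set G' : SimpleGraph V := G \ SimpleGraph.fromEdgeSet {s(u,w)} with hG'
      have hG'conn : G'.Connected := by
        rw [connected_iff] at h ⊢
        exact ⟨fun a b => reach_del G hr (h.1 a b), h.2⟩
      have hsub : G'.edgeSet = G.edgeSet \ {s(u,w)} := by
        rw [hG']
        simp only [edgeSet_sdiff, edgeSet_fromEdgeSet, edgeSet_sdiff_sdiff_isDiag]
      have hmem : s(u,w) ∈ G.edgeSet := hadj
      have hcard : G'.edgeSet.ncard = m - 1 := by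
        rw [hsub, Set.ncard_diff_singleton_of_mem hmem, hm]
      have hm1 : 1 ≤ m := by
        rw [← hm]
        exact (Set.ncard_pos (G.edgeSet.toFinite)).mpr ⟨_, hmem⟩
      have := (ih (m-1) (by omega) G' hG'conn hcard).1
      constructor
      · omega
      · intro hEq
        omega

lemma trail_isPath {G : SimpleGraph V} (hG : G.IsAcyclic) {u v : V}
    (p : G.Walk u v) (hp : p.IsTrail) : p.IsPath := by
  induction p with
  | nil => exact Walk.IsPath.nil
  | cons hadj p ih =>
    rename_i x y z
    rw [Walk.isTrail_cons] at hp
    have hpath := ih hp.1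
    rw [Walk.cons_isPath_iff]
    refine ⟨hpath, fun hx => ?_⟩
    have hq : (p.takeUntil x hx).IsPath := hpath.takeUntil hx
    have hcyc : (Walk.cons hadj (p.takeUntil x hx)).IsCycle := by
      rw [Walk.cons_isCycle_iff]
      refine ⟨hq, fun he => ?_⟩
      have : s(x,y) ∈ p.edges := by
        have hsl : (p.takeUntil x hx).edges <+: p.edges := by
          conv_rhs => rw [← Walk.take_spec p hx]
          rw [Walk.edges_append]
          exact ⟨_, rfl⟩
        exact hsl.subset he
      exact hp.2 this
    exact hG _ hcyc

/-- In an acyclic graph, any path between two vertices in the support of a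
"connected" subgraph `A` uses only edges of `A`. -/
lemma path_edges_in_sub {G A : SimpleGraph V} (hG : G.IsAcyclic) (hle : A ≤ G)
    (hconn : ∀ a b, a ∈ A.support → b ∈ A.support → A.Reachable a b) {u v : V}
    (p : G.Walk u v) (hp : p.IsPath) (hu : u ∈ A.support) (hv : v ∈ A.support) :
    ∀ e ∈ p.edges, e ∈ A.edgeSet := by
  obtain ⟨q⟩ := hconn u v hu hv
  have hq : q.bypass.IsPath := Walk.bypass_isPath q
  have hAe : ∀ e ∈ q.bypass.edges, e ∈ G.edgeSet := by
    intro e he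
    exact (edgeSet_subset_edgeSet.mpr hle) (q.bypass.edges_subset_edgeSet he)
  have hq' : (q.bypass.transfer G hAe).IsPath := hq.transfer hAe
  have := hG.path_unique ⟨p, hp⟩ ⟨q.bypass.transfer G hAe, hq'⟩
  have hedge : p.edges = q.bypass.edges := by
    rw [show p = q.bypass.transfer G hAe from congrArg Subtype.val this]
    exact Walk.edges_transfer _ _
  intro e he
  rw [hedge] at he
  exact q.bypass.edges_subset_edgeSet he

/-- Contiguity: in an acyclic graph, the `A`-edges of a path are contiguous. -/
lemma contiguity {G A : SimpleGraph V} (hG : G.IsAcyclic) (hle : A ≤ G)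
    (hconn : ∀ a b, a ∈ A.support → b ∈ A.support → A.Reachable a b) {u v : V}
    (p : G.Walk u v) (hp : p.IsPath) :
    ∃ l₁ l₂ l₃ : List (Sym2 V), p.edges = l₁ ++ l₂ ++ l₃ ∧
      (∀ f ∈ l₁, f ∉ A.edgeSet) ∧ (∀ f ∈ l₂, f ∈ A.edgeSet) ∧
      (∀ f ∈ l₃, f ∉ A.edgeSet) := by
  induction p with
  | nil => exact ⟨[], [], [], rfl, by simp, by simp, by simp⟩
  | cons hadj p ih =>
    rename_i x y z
    rw [Walk.cons_isPath_iff] at hp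
    obtain ⟨l₁, l₂, l₃, hsplit, h1, h2, h3⟩ := ih hp.1
    by_cases he : s(x,y) ∈ A.edgeSet
    · -- first edge in A
      rcases Decidable.em (l₂ = []) with h2e | h2ne
      · -- all of p's A-edges empty: put e alone in middle
        refine ⟨[], [s(x,y)], l₁ ++ l₃, ?_, by simp, by simp [he], ?_⟩
        · simp only [Walk.edges_cons, hsplit, h2e]
          simp
        · intro f hf
          rcases List.mem_append.mp hf with hf | hf
          exacts [h1 f hf, h3 f hf]
      · -- l₂ nonempty: show l₁ = []
        have hl1 : l₁ = [] := by
          by_contra hl1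
          -- get contradiction via path_edges_in_sub
          obtain ⟨g, hg2⟩ := List.exists_mem_of_ne_nil l₂ h2ne
          have hgA : g ∈ A.edgeSet := h2 g hg2
          have hgp : g ∈ p.edges := by
            rw [hsplit]
            simp only [List.mem_append]
            exact Or.inl (Or.inr hg2)
          obtain ⟨g₁, g₂⟩ := g
          -- pick endpoint c of g with c ≠ y
          obtain ⟨c, hcA, hcp, hcy⟩ : ∃ c, c ∈ A.support ∧ c ∈ p.support ∧ c ≠ y := by
            rcases Decidable.em (g₁ = y) with rfl | hg1y
            · refine ⟨g₂, ⟨g₁, (A.mem_edgeSet.mp hgA).symm⟩,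
                p.snd_mem_support_of_mem_edges hgp, ?_⟩
              exact fun h => (A.mem_edgeSet.mp hgA).ne (h.symm ▸ rfl)
            · exact ⟨g₁, ⟨g₂, A.mem_edgeSet.mp hgA⟩,
                p.fst_mem_support_of_mem_edges hgp, hg1y⟩
          -- the path cons hadj (p.takeUntil c)
          have hq : (p.takeUntil c hcp).IsPath := hp.1.takeUntil hcp
          have hQ : (Walk.cons hadj (p.takeUntil c hcp)).IsPath := by
            rw [Walk.cons_isPath_iff]
            exact ⟨hq, fun hx => hp.2 (Walk.support_takeUntil_subset p hcp hx)⟩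
          have hxA : x ∈ A.support := ⟨y, A.mem_edgeSet.mp he⟩
          have hall := path_edges_in_sub hG hle hconn _ hQ hxA hcA
          -- first edge of p is head of l₁, not in A, but in the cons path
          obtain ⟨f, hf1⟩ := List.exists_mem_of_ne_nil l₁ hl1
          have hfhd : ∃ f' l', l₁ = f' :: l' := by
            cases l₁ with
            | nil => exact absurd rfl hl1
            | cons a l => exact ⟨a, l, rfl⟩
          obtain ⟨f', l', rfl⟩ := hfhd
          -- f' is the first edge of p
          have hpe : p.edges = f' :: (l' ++ l₂ ++ l₃) := by
            rw [hsplit]; simp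
          -- takeUntil c is nonnil since y ≠ c, so its edges are a nonempty prefix
          have htkp : (p.takeUntil c hcp).edges <+: p.edges := by
            conv_rhs => rw [← Walk.take_spec p hcp]
            rw [Walk.edges_append]
            exact ⟨_, rfl⟩
          have htne : (p.takeUntil c hcp).edges ≠ [] := by
            intro h0
            have : (p.takeUntil c hcp).Nil := Walk.nil_iff_length_eq.mpr (by
              have := congrArg List.length h0
              simpa [Walk.length_edges] using this)
            exact hcy ((Walk.Nil.eq this).symm) |>.elim
          have hfirst : f' ∈ (p.takeUntil c hcp).edges := by
            obtain ⟨t, ht⟩ := htkp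
            cases h0 : (p.takeUntil c hcp).edges with
            | nil => exact absurd h0 htne
            | cons a l =>
              rw [h0] at ht
              rw [hpe] at ht
              have : a = f' := by
                have := congrArg List.head? ht
                simpa using this
              simp [this]
          have : f' ∈ A.edgeSet := hall f' (by
            simp only [Walk.edges_cons, List.mem_cons]
            exact Or.inr hfirst)
          exact h1 f' (by simp) this
        refine ⟨[], s(x,y) :: l₂, l₃, ?_, by simp, ?_, h3⟩
        · simp only [Walk.edges_cons, hsplit, hl1]
          simp
        · intro f hf
          rcases List.mem_cons.mp hf with rfl | hf
          exacts [he, h2 f hf]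
    · -- first edge not in A: prepend to l₁
      refine ⟨s(x,y) :: l₁, l₂, l₃, ?_, ?_, h2, h3⟩
      · simp only [Walk.edges_cons, hsplit]
        simp
      · intro f hf
        rcases List.mem_cons.mp hf with rfl | hf
        exacts [he, h1 f hf]
/-- Extraction: from a trail whose edges decompose as `l₁ ++ l₂ ++ l₃` with the
`l₂`-part inside `A`, extract an `A`-trail with edges exactly `l₂`. -/
lemma extract {G A : SimpleGraph V} {x y : V}
    (W : G.Walk x y) (hW : W.IsTrail) :
    ∀ l₁ l₂ l₃ : List (Sym2 V), W.edges = l₁ ++ l₂ ++ l₃ →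
    (∀ f ∈ l₂, f ∈ A.edgeSet) →
    ∃ (c d : V) (W' : A.Walk c d), W'.IsTrail ∧ W'.edges = l₂ ∧
      (l₁ = [] → l₂ ≠ [] → c = x) := by
  induction W with
  | nil =>
    rename_i u
    intro l₁ l₂ l₃ hsp _
    have hlen : l₂ = [] := List.length_eq_zero_iff.mp (by
      have := congrArg List.length hsp
      simp at this
      omega)
    subst hlen
    exact ⟨u, u, Walk.nil, Walk.IsTrail.nil, rfl, fun _ h => absurd rfl h⟩
  | cons hadj W ih =>
    rename_i a b z
    intro l₁ l₂ l₃ hsp hl₂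
    rw [Walk.isTrail_cons] at hW
    rcases Decidable.em (l₂ = []) with rfl | h2ne
    · exact ⟨a, a, Walk.nil, Walk.IsTrail.nil, rfl, fun _ h => absurd rfl h⟩
    cases l₁ with
    | cons f l₁' =>
      have hsp' : W.edges = l₁' ++ l₂ ++ l₃ := by
        have : s(a,b) :: W.edges = f :: (l₁' ++ l₂ ++ l₃) := by
          simpa using hsp
        exact (List.cons_eq_cons.mp this).2
      obtain ⟨c, d, W', hT, hE, _⟩ := ih hW.1 l₁' l₂ l₃ hsp' hl₂
      exact ⟨c, d, W', hT, hE, fun h => absurd h (by simp)⟩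
    | nil =>
      -- l₂ = e :: l₂'
      cases l₂ with
      | nil => exact absurd rfl h2ne
      | cons e l₂' =>
        have hsp' : s(a,b) :: W.edges = e :: (l₂' ++ l₃) := by simpa using hsp
        obtain ⟨hfe, hsp''⟩ := List.cons_eq_cons.mp hsp'
        have heA : s(a,b) ∈ A.edgeSet := hfe ▸ hl₂ e (by simp)
        have hadj' : A.Adj a b := A.mem_edgeSet.mp heA
        have hl₂' : ∀ f ∈ l₂', f ∈ A.edgeSet := fun f hf => hl₂ f (by simp [hf])
        obtain ⟨c, d, W', hT, hE, hfirst⟩ := ih hW.1 [] l₂' l₃ (by simpa using hsp'') hl₂'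
        rcases Decidable.em (l₂' = []) with rfl | h2'
        · refine ⟨a, b, Walk.cons hadj' Walk.nil, ?_, by simp [← hfe], fun _ _ => rfl⟩
          simp [Walk.isTrail_cons]
        · have hc : c = b := hfirst rfl h2'
          subst hc
          refine ⟨a, d, Walk.cons hadj' W', ?_, ?_, fun _ _ => rfl⟩
          · rw [Walk.isTrail_cons]
            refine ⟨hT, fun hmem => ?_⟩
            rw [hE] at hmem
            exact hW.2 (by
              rw [hsp'']
              exact List.mem_append.mpr (Or.inl hmem))
          · simp [hE, ← hfe]
lemma restrict {G A : SimpleGraph V} (hG : G.IsAcyclic) (hle : A ≤ G)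
    (hconn : ∀ a b, a ∈ A.support → b ∈ A.support → A.Reachable a b) {x y : V}
    (W : G.Walk x y) (hW : W.IsTrail) :
    ∃ (c d : V) (W' : A.Walk c d), W'.IsTrail ∧
      ∀ e, e ∈ W'.edges ↔ (e ∈ W.edges ∧ e ∈ A.edgeSet) := by
  have hp := trail_isPath hG W hW
  obtain ⟨l₁, l₂, l₃, hsplit, h1, h2, h3⟩ := contiguity hG hle hconn W hp
  obtain ⟨c, d, W', hT, hE, _⟩ := extract W hW l₁ l₂ l₃ hsplit h2
  refine ⟨c, d, W', hT, fun e => ?_⟩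
  rw [hE]
  constructor
  · intro he
    exact ⟨by rw [hsplit]; simp only [List.mem_append]; exact Or.inl (Or.inr he), h2 e he⟩
  · rintro ⟨heW, heA⟩
    rw [hsplit] at heW
    rcases List.mem_append.mp heW with h | h
    · rcases List.mem_append.mp h with h | h
      · exact absurd heA (h1 e h)
      · exact h
    · exact absurd heA (h3 e h)

variable {α : Type*}

lemma pull {T : SimpleGraph α} {φ : α ↪ V} {x y : V}
    (W : (T.map φ).Walk x y) :
    ∀ a : α, φ a = x → ∃ (b : α) (W₀ : T.Walk a b), φ b = y ∧
      W₀.edges.map (Sym2.map φ) = W.edges := by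
  induction W with
  | nil =>
    intro a ha
    exact ⟨a, Walk.nil, ha, rfl⟩
  | cons hadj W ih =>
    rename_i p q r
    intro a ha
    obtain ⟨a', b', hab, ha', hb'⟩ := (SimpleGraph.map_adj φ T p q).mp hadj
    have haa : a' = a := φ.injective (by rw [ha', ha])
    subst haa
    obtain ⟨b, W₀, hb, hE⟩ := ih b' hb'
    refine ⟨b, Walk.cons hab W₀, hb, ?_⟩
    simp only [Walk.edges_cons, List.map_cons, hE, List.cons.injEq, and_true]
    rw [Sym2.map_pair_eq, ha', hb']
lemma elt_transfer {T : SimpleGraph α} {φ : α ↪ V} {G : SimpleGraph V}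
    (hG : G.IsAcyclic) (hle : T.map φ ≤ G)
    (hconn : ∀ a b, a ∈ (T.map φ).support → b ∈ (T.map φ).support →
      (T.map φ).Reachable a b)
    (a₀ : α) {x y : V} (W : G.Walk x y) (hW : W.IsTrail) :
    ∃ (a b : α) (W₀ : T.Walk a b), W₀.IsTrail ∧
      ∀ e : Sym2 α, e ∈ W₀.edges ↔
        (Sym2.map φ e ∈ W.edges ∧ Sym2.map φ e ∈ (T.map φ).edgeSet) := by
  obtain ⟨c, d, W', hT', hiff⟩ := restrict hG hle hconn W hW
  cases W' with
  | nil =>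
    refine ⟨a₀, a₀, Walk.nil, Walk.IsTrail.nil, fun e => ?_⟩
    simp only [Walk.edges_nil, List.not_mem_nil, false_iff, not_and]
    intro h1 h2
    exact (by simpa using (hiff (Sym2.map φ e)).mpr ⟨h1, h2⟩)
  | cons hadj W₂ =>
    rename_i v'
    obtain ⟨a1, b1, hab1, ha1, hb1⟩ := (SimpleGraph.map_adj φ T c v').mp hadj
    obtain ⟨b, W₀, hb, hE⟩ := pull (Walk.cons hadj W₂) a1 ha1
    refine ⟨a1, b, W₀, ?_, fun e => ?_⟩
    · rw [Walk.isTrail_def]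
      have := hT'.edges_nodup
      rw [← hE] at this
      exact this.of_map _
    · constructor
      · intro he
        have : Sym2.map φ e ∈ (Walk.cons hadj W₂).edges := by
          rw [← hE]
          exact List.mem_map_of_mem he
        obtain ⟨h1, h2⟩ := (hiff _).mp this
        exact ⟨h1, h2⟩
      · rintro ⟨h1, h2⟩
        have : Sym2.map φ e ∈ (Walk.cons hadj W₂).edges := (hiff _).mpr ⟨h1, h2⟩
        rw [← hE] at this
        obtain ⟨e', he', heq⟩ := List.mem_map.mp this
        rwa [← Sym2.map.injective φ.injective heq]

lemma list_transfer {T : SimpleGraph α} {φ : α ↪ V} {G : SimpleGraph V}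
    (hG : G.IsAcyclic) (hle : T.map φ ≤ G)
    (hconn : ∀ a b, a ∈ (T.map φ).support → b ∈ (T.map φ).support →
      (T.map φ).Reachable a b)
    (a₀ : α) (L : List (Σ u : V, Σ v : V, G.Walk u v))
    (htr : ∀ P ∈ L, P.2.2.IsTrail)
    (hpw : L.Pairwise (fun P Q => ∀ e ∈ P.2.2.edges, e ∉ Q.2.2.edges)) :
    ∃ L₀ : List (Σ u : α, Σ v : α, T.Walk u v), L₀.length = L.length ∧
      (∀ P ∈ L₀, P.2.2.IsTrail) ∧
      L₀.Pairwise (fun P Q => ∀ e ∈ P.2.2.edges, e ∉ Q.2.2.edges) ∧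
      ∀ e : Sym2 α, (∃ P ∈ L₀, e ∈ P.2.2.edges) ↔
        ((∃ P ∈ L, Sym2.map φ e ∈ P.2.2.edges) ∧ Sym2.map φ e ∈ (T.map φ).edgeSet) := by
  induction L with
  | nil => exact ⟨[], rfl, by simp, by simp, by simp⟩
  | cons P L ih =>
    obtain ⟨L₀, hlen, htr₀, hpw₀, hcov₀⟩ := ih (fun Q hQ => htr Q (by simp [hQ]))
      (List.Pairwise.of_cons hpw)
    obtain ⟨a, b, W₀, hW₀, hiff⟩ := elt_transfer hG hle hconn a₀ P.2.2
      (htr P (by simp))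
    refine ⟨⟨a, b, W₀⟩ :: L₀, by simp [hlen], ?_, ?_, ?_⟩
    · rintro Q hQ
      rcases List.mem_cons.mp hQ with rfl | hQ
      exacts [hW₀, htr₀ Q hQ]
    · rw [List.pairwise_cons]
      refine ⟨fun Q hQ e he => ?_, hpw₀⟩
      have h1 := (hiff e).mp he
      intro heQ
      have h2 := (hcov₀ e).mp ⟨Q, hQ, heQ⟩
      obtain ⟨⟨R, hR, hmemR⟩, hmapA⟩ := h2
      have := (List.pairwise_cons.mp hpw).1 R hR
      exact this _ h1.1 hmemR
    · intro e
      constructor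
      · rintro ⟨Q, hQ, heQ⟩
        rcases List.mem_cons.mp hQ with rfl | hQ
        · obtain ⟨h1, h2⟩ := (hiff e).mp heQ
          exact ⟨⟨P, by simp, h1⟩, h2⟩
        · obtain ⟨⟨R, hR, hmemR⟩, h2⟩ := (hcov₀ e).mp ⟨Q, hQ, heQ⟩
          exact ⟨⟨R, by simp [hR], hmemR⟩, h2⟩
      · rintro ⟨⟨R, hR, hmemR⟩, h2⟩
        rcases List.mem_cons.mp hR with rfl | hR
        · exact ⟨⟨a, b, W₀⟩, by simp, (hiff e).mpr ⟨hmemR, h2⟩⟩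
        · obtain ⟨Q, hQ, heQ⟩ := (hcov₀ e).mpr ⟨⟨R, hR, hmemR⟩, h2⟩
          exact ⟨Q, by simp [hQ], heQ⟩
def decompSet {β : Type*} (G : SimpleGraph β) : Set ℕ :=
  {r : ℕ | ∃ L : List (Σ u : β, Σ v : β, G.Walk u v),
    L.length = r ∧ (∀ P ∈ L, P.2.2.IsTrail) ∧
    L.Pairwise (fun P Q => ∀ e ∈ P.2.2.edges, e ∉ Q.2.2.edges) ∧
    ∀ e, e ∈ G.edgeSet ↔ ∃ P ∈ L, e ∈ P.2.2.edges}

lemma decomp_of_list {β : Type*} (G : SimpleGraph β) (l : List (Sym2 β)) (hnd : l.Nodup)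
    (hsub : ∀ e ∈ l, e ∈ G.edgeSet) :
    ∃ L : List (Σ u : β, Σ v : β, G.Walk u v),
      L.length = l.length ∧ (∀ P ∈ L, P.2.2.IsTrail) ∧
      L.Pairwise (fun P Q => ∀ e ∈ P.2.2.edges, e ∉ Q.2.2.edges) ∧
      ∀ e, (∃ P ∈ L, e ∈ P.2.2.edges) ↔ e ∈ l := by
  induction l with
  | nil => exact ⟨[], rfl, by simp, by simp, by simp⟩
  | cons e t ih =>
    obtain ⟨L, hlen, htr, hpw, hcov⟩ := ih (hnd.of_cons) (fun f hf => hsub f (by simp [hf]))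
    obtain ⟨u, v⟩ := e
    have hadj : G.Adj u v := G.mem_edgeSet.mp (hsub _ (by simp))
    refine ⟨⟨u, v, Walk.cons hadj Walk.nil⟩ :: L, by simp [hlen], ?_, ?_, ?_⟩
    · rintro Q hQ
      rcases List.mem_cons.mp hQ with rfl | hQ
      · simp [Walk.isTrail_cons]
      · exact htr Q hQ
    · rw [List.pairwise_cons]
      refine ⟨fun Q hQ f hf => ?_, hpw⟩
      simp only [Walk.edges_cons, Walk.edges_nil, List.mem_singleton] at hf
      subst hf
      intro hmem
      have hft : s(u,v) ∈ t := (hcov _).mp ⟨Q, hQ, hmem⟩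
      exact (List.nodup_cons.mp hnd).1 hft
    · intro f
      simp only [List.mem_cons]
      constructor
      · rintro ⟨Q, hQ, hfQ⟩
        rcases hQ with rfl | hQ
        · simp only [Walk.edges_cons, Walk.edges_nil, List.mem_singleton] at hfQ
          exact Or.inl hfQ
        · exact Or.inr ((hcov f).mp ⟨Q, hQ, hfQ⟩)
      · rintro (rfl | hf)
        · exact ⟨_, Or.inl rfl, by simp⟩
        · obtain ⟨Q, hQ, hfQ⟩ := (hcov f).mpr hf
          exact ⟨Q, Or.inr hQ, hfQ⟩
lemma decompSet_nonempty {β : Type*} [Fintype β] (G : SimpleGraph β) :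
    (decompSet G).Nonempty := by
  classical
  set l := (G.edgeSet.toFinite).toFinset.toList with hl
  obtain ⟨L, hlen, htr, hpw, hcov⟩ := decomp_of_list G l (Finset.nodup_toList _)
    (fun e he => by
      rw [hl, Finset.mem_toList, Set.Finite.mem_toFinset] at he
      exact he)
  refine ⟨l.length, L, hlen, htr, hpw, fun e => ?_⟩
  rw [hcov e, hl, Finset.mem_toList, Set.Finite.mem_toFinset]

lemma sInf_decompSet_mem {β : Type*} [Fintype β] (G : SimpleGraph β) :
    sInf (decompSet G) ∈ decompSet G :=
  Nat.sInf_mem (decompSet_nonempty G)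

lemma one_le_sInf_decompSet {β : Type*} [Fintype β] (G : SimpleGraph β)
    (h : G.edgeSet.Nonempty) : 1 ≤ sInf (decompSet G) := by
  by_contra hlt
  push_neg at hlt
  interval_cases h0 : sInf (decompSet G)
  obtain ⟨L, hlen, _, _, hcov⟩ := h0 ▸ sInf_decompSet_mem G
  rw [List.length_eq_zero_iff] at hlen
  subst hlen
  obtain ⟨e, he⟩ := h
  obtain ⟨P, hP, -⟩ := (hcov e).mp he
  exact absurd hP List.not_mem_nil

lemma tdn_mono {α : Type*} [Fintype α] {V : Type*} [Fintype V]
    {T : SimpleGraph α} {φ : α ↪ V} {G : SimpleGraph V}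
    (hG : G.IsAcyclic) (hle : T.map φ ≤ G)
    (hconn : ∀ a b, a ∈ (T.map φ).support → b ∈ (T.map φ).support →
      (T.map φ).Reachable a b)
    (a₀ : α) :
    sInf (decompSet T) ≤ sInf (decompSet G) := by
  obtain ⟨L, hlen, htr, hpw, hcov⟩ := sInf_decompSet_mem G
  obtain ⟨L₀, hlen₀, htr₀, hpw₀, hcov₀⟩ := list_transfer hG hle hconn a₀ L htr hpw
  refine Nat.sInf_le ⟨L₀, by omega, htr₀, hpw₀, fun e => ?_⟩
  rw [hcov₀ e]
  constructor
  · intro he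
    have hmape : Sym2.map φ e ∈ (T.map φ).edgeSet := by
      induction e with
      | _ a b =>
        rw [Sym2.map_pair_eq]
        exact (T.map φ).mem_edgeSet.mpr ((SimpleGraph.map_adj φ T _ _).mpr
          ⟨a, b, T.mem_edgeSet.mp he, rfl, rfl⟩)
    refine ⟨(hcov _).mp (edgeSet_subset_edgeSet.mpr hle hmape), hmape⟩
  · rintro ⟨-, hmape⟩
    induction e with
    | _ a b =>
      rw [Sym2.map_pair_eq] at hmape
      obtain ⟨a', b', hab, ha, hb⟩ := (SimpleGraph.map_adj φ T _ _).mp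
        ((T.map φ).mem_edgeSet.mp hmape)
      have : a' = a := φ.injective ha
      subst this
      have : b' = b := φ.injective hb
      subst this
      exact T.mem_edgeSet.mpr hab
lemma exists_adj_of_connected [Fintype α] {T : SimpleGraph α} (hT : T.Connected)
    (hcard : 2 ≤ Fintype.card α) (a : α) : ∃ b, T.Adj a b := by
  have : Nontrivial α := Fintype.one_lt_card_iff_nontrivial.mp hcard
  obtain ⟨b, hb⟩ := exists_ne a
  obtain ⟨W⟩ := hT.preconnected a b
  cases W with
  | nil => exact absurd rfl hb
  | cons hadj _ => exact ⟨_, hadj⟩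

lemma support_map_eq [Fintype α] {T : SimpleGraph α} (hT : T.Connected)
    (hcard : 2 ≤ Fintype.card α) (φ : α ↪ V) :
    (T.map φ).support = Set.range φ := by
  ext x
  constructor
  · rintro ⟨y, hxy⟩
    obtain ⟨a, b, -, ha, -⟩ := (SimpleGraph.map_adj φ T _ _).mp hxy
    exact ⟨a, ha⟩
  · rintro ⟨a, rfl⟩
    obtain ⟨b, hab⟩ := exists_adj_of_connected hT hcard a
    exact ⟨φ b, (SimpleGraph.map_adj φ T _ _).mpr ⟨a, b, hab, rfl, rfl⟩⟩

lemma reach_map {T : SimpleGraph α} (hT : T.Connected) (φ : α ↪ V) (a b : α) :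
    (T.map φ).Reachable (φ a) (φ b) := by
  obtain ⟨W⟩ := hT.preconnected a b
  exact ⟨W.map ⟨φ, fun h => (SimpleGraph.map_adj φ T _ _).mpr ⟨_, _, h, rfl, rfl⟩⟩⟩

/-- lifting a walk into an induced subgraph -/
lemma lift_induce {G : SimpleGraph V} {s : Set V} {x y : V}
    (W : G.Walk x y) (hs : ∀ v ∈ W.support, v ∈ s) :
    ∃ W' : (G.induce s).Walk ⟨x, hs x W.start_mem_support⟩ ⟨y, hs y W.end_mem_support⟩,
      W'.support.map Subtype.val = W.support ∧
      W'.edges.map (Sym2.map Subtype.val) = W.edges := by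
  induction W with
  | nil => exact ⟨Walk.nil, by simp, by simp⟩
  | cons hadj W ih =>
    rename_i p q r
    have hq : ∀ v ∈ W.support, v ∈ s := fun v hv => hs v (by simp [hv])
    obtain ⟨W', hsup, hedg⟩ := ih hq
    have hadj' : (G.induce s).Adj ⟨p, hs p (by simp)⟩ ⟨q, hq q W.start_mem_support⟩ := by
      simp only [comap_adj, Function.Embedding.coe_subtype]
      exact hadj
    refine ⟨Walk.cons hadj' W', ?_, ?_⟩
    · simp only [Walk.support_cons, List.map_cons, hsup]
    · simp only [Walk.edges_cons, List.map_cons, hedg, List.cons.injEq, and_true]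
      rfl
lemma support_walk {G : SimpleGraph V} {x y : V} (W : G.Walk x y) :
    ∀ v ∈ W.support, v = x ∨ v ∈ G.support := by
  induction W with
  | nil => intro v hv; simp at hv; exact Or.inl hv
  | cons hadj W ih =>
    rename_i p q r
    intro v hv
    rw [Walk.support_cons, List.mem_cons] at hv
    rcases hv with rfl | hv
    · exact Or.inl rfl
    · rcases ih v hv with rfl | h
      · exact Or.inr ⟨p, hadj.symm⟩
      · exact Or.inr h

lemma support_sup {G H : SimpleGraph V} : (G ⊔ H).support = G.support ∪ H.support := by
  ext v
  simp only [SimpleGraph.mem_support, sup_adj, Set.mem_union]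
  constructor
  · rintro ⟨w, h | h⟩
    exacts [Or.inl ⟨w, h⟩, Or.inr ⟨w, h⟩]
  · rintro (⟨w, h⟩ | ⟨w, h⟩)
    exacts [⟨w, Or.inl h⟩, ⟨w, Or.inr h⟩]

lemma induce_edge_image {G : SimpleGraph V} {s : Set V} (hsup : G.support ⊆ s) :
    Sym2.map (Subtype.val) '' (G.induce s).edgeSet = G.edgeSet := by
  ext e
  constructor
  · rintro ⟨e', he', rfl⟩
    induction e' with
    | _ a b =>
      rw [Sym2.map_pair_eq]
      exact (G.mem_edgeSet).mpr (by
        have := (G.induce s).mem_edgeSet.mp he'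
        simpa using this)
  · intro he
    induction e with
    | _ a b =>
      have hadj := G.mem_edgeSet.mp he
      have ha : a ∈ s := hsup ⟨b, hadj⟩
      have hb : b ∈ s := hsup ⟨a, hadj.symm⟩
      refine ⟨s(⟨a, ha⟩, ⟨b, hb⟩), ?_, by rw [Sym2.map_pair_eq]⟩
      simpa using hadj

lemma map_edgeSet_eq {T : SimpleGraph α} (φ : α ↪ V) :
    (T.map φ).edgeSet = Sym2.map ⇑φ '' T.edgeSet := by
  ext e
  constructor
  · intro he
    induction e with
    | _ x y =>
      obtain ⟨a, b, hab, ha, hb⟩ := (SimpleGraph.map_adj φ T _ _).mp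
        ((T.map φ).mem_edgeSet.mp he)
      exact ⟨s(a,b), T.mem_edgeSet.mpr hab, by rw [Sym2.map_pair_eq, ha, hb]⟩
  · rintro ⟨e', he', rfl⟩
    exact SimpleGraph.Hom.map_mem_edgeSet
      ⟨⇑φ, fun h => (SimpleGraph.map_adj φ T _ _).mpr ⟨_, _, h, rfl, rfl⟩⟩ he'

/-- Main geometric lemma: counting plus acyclicity in the equality case. -/
lemma main_counting [Fintype α] [Fintype V] (T : SimpleGraph α) (hT : T.IsTree)
    (hcard : 2 ≤ Fintype.card α) (φ₁ φ₂ : α ↪ V)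
    (hint : (Set.range ⇑φ₁ ∩ Set.range ⇑φ₂).Nonempty) :
    (((T.map φ₁).edgeSet ∩ (T.map φ₂).edgeSet).ncard + 1
      ≤ (Set.range ⇑φ₁ ∩ Set.range ⇑φ₂).ncard) ∧
    ((Set.range ⇑φ₁ ∩ Set.range ⇑φ₂).ncard
      = ((T.map φ₁).edgeSet ∩ (T.map φ₂).edgeSet).ncard + 1 →
      (T.map φ₁ ⊔ T.map φ₂).IsAcyclic) := by
  classical
  set A := T.map φ₁ with hA
  set B := T.map φ₂ with hB
  set U := A ⊔ B with hU
  set s : Set V := Set.range ⇑φ₁ ∪ Set.range ⇑φ₂ with hs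
  have hTc : T.Connected := hT.isConnected
  have hsupA : A.support = Set.range ⇑φ₁ := support_map_eq hTc hcard φ₁
  have hsupB : B.support = Set.range ⇑φ₂ := support_map_eq hTc hcard φ₂
  have hsupU : U.support ⊆ s := by
    rw [hU, support_sup, hsupA, hsupB]
  obtain ⟨z, hz1, hz2⟩ := hint
  obtain ⟨z1, hz1'⟩ := hz1
  obtain ⟨z2, hz2'⟩ := hz2
  have hreach : ∀ x ∈ s, ∀ y ∈ s, U.Reachable x y := by
    have hAz : ∀ x ∈ Set.range ⇑φ₁, U.Reachable x z := by
      rintro x ⟨a, rfl⟩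
      have := reach_map hTc φ₁ a z1
      rw [hz1'] at this
      exact this.mono le_sup_left
    have hBz : ∀ x ∈ Set.range ⇑φ₂, U.Reachable x z := by
      rintro x ⟨a, rfl⟩
      have := reach_map hTc φ₂ a z2
      rw [hz2'] at this
      exact this.mono le_sup_right
    intro x hx y hy
    have h1 : U.Reachable x z := by rcases hx with hx | hx; exacts [hAz x hx, hBz x hx]
    have h2 : U.Reachable y z := by rcases hy with hy | hy; exacts [hAz y hy, hBz y hy]
    exact h1.trans h2.symm
  have hzs : z ∈ s := Or.inl ⟨z1, hz1'⟩
  have hconnG' : (U.induce s).Connected := by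
    rw [connected_iff]
    refine ⟨?_, ⟨⟨z, hzs⟩⟩⟩
    rintro ⟨x, hx⟩ ⟨y, hy⟩
    obtain ⟨W⟩ := hreach x hx y hy
    have hWs : ∀ v ∈ W.support, v ∈ s := by
      intro v hv
      rcases support_walk W v hv with rfl | h
      exacts [hx, hsupU h]
    obtain ⟨W', -, -⟩ := lift_induce W hWs
    exact ⟨W'⟩
  have himg := induce_edge_image (G := U) (s := s) hsupU
  have hG'card : (U.induce s).edgeSet.ncard = U.edgeSet.ncard := by
    rw [← himg, Set.ncard_image_of_injective _ (Sym2.map.injective Subtype.val_injective)]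
  have hedgeT : T.edgeSet.ncard + 1 = Fintype.card α := by
    rw [ncard_edgeSet_eq]; exact hT.card_edgeFinset
  have hAcard : A.edgeSet.ncard + 1 = Fintype.card α := by
    rw [hA, map_edgeSet_eq φ₁,
      Set.ncard_image_of_injective _ (Sym2.map.injective φ₁.injective), hedgeT]
  have hBcard : B.edgeSet.ncard + 1 = Fintype.card α := by
    rw [hB, map_edgeSet_eq φ₂,
      Set.ncard_image_of_injective _ (Sym2.map.injective φ₂.injective), hedgeT]
  have hUcard : U.edgeSet.ncard + (A.edgeSet ∩ B.edgeSet).ncard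
      = A.edgeSet.ncard + B.edgeSet.ncard := by
    rw [hU, edgeSet_sup]
    exact Set.ncard_union_add_ncard_inter _ _ (Set.toFinite _) (Set.toFinite _)
  have hr1 : (Set.range ⇑φ₁).ncard = Fintype.card α := by
    rw [← Set.image_univ, Set.ncard_image_of_injective _ φ₁.injective, Set.ncard_univ,
      Nat.card_eq_fintype_card]
  have hr2 : (Set.range ⇑φ₂).ncard = Fintype.card α := by
    rw [← Set.image_univ, Set.ncard_image_of_injective _ φ₂.injective, Set.ncard_univ,
      Nat.card_eq_fintype_card]
  have hscard : s.ncard + (Set.range ⇑φ₁ ∩ Set.range ⇑φ₂).ncard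
      = Fintype.card α + Fintype.card α := by
    rw [hs, Set.ncard_union_add_ncard_inter _ _ (Set.toFinite _) (Set.toFinite _), hr1, hr2]
  have hcards : Fintype.card ↥s = s.ncard := by
    rw [← Nat.card_coe_set_eq, Nat.card_eq_fintype_card]
  have hk'le : (Set.range ⇑φ₁ ∩ Set.range ⇑φ₂).ncard ≤ Fintype.card α := by
    rw [← hr1]
    exact Set.ncard_le_ncard Set.inter_subset_left (Set.toFinite _)
  obtain ⟨hle1, hac1⟩ := conn_card_le (U.induce s) hconnG'
  rw [hcards, hG'card] at hle1 hac1
  have hinter : (T.map φ₁).edgeSet ∩ (T.map φ₂).edgeSet = A.edgeSet ∩ B.edgeSet := by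
    rw [hA, hB]
  rw [hinter]
  constructor
  · omega
  · intro heq
    have hacG' : (U.induce s).IsAcyclic := hac1 (by omega)
    intro v c hc
    have hvs : ∀ w ∈ c.support, w ∈ s := by
      intro w hw
      rcases support_walk c w hw with rfl | h
      · cases c with
        | nil => exact absurd hc.three_le_length (by simp)
        | cons hadj _ => exact hsupU ⟨_, hadj⟩
      · exact hsupU h
    obtain ⟨W', hWsup, hWedg⟩ := lift_induce c hvs
    refine hacG' W' ?_
    refine ⟨⟨⟨?_⟩, ?_⟩, ?_⟩
    · refine List.Nodup.of_map (Sym2.map Subtype.val) ?_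
      rw [hWedg]
      exact hc.isCircuit.isTrail.edges_nodup
    · intro h0
      have hlen := congrArg List.length hWedg
      rw [h0] at hlen
      simp only [Walk.edges_nil, List.map_nil, List.length_nil] at hlen
      have h3 := hc.three_le_length
      rw [← Walk.length_edges] at h3
      omega
    · have htl : W'.support.tail.map Subtype.val = c.support.tail := by
        rw [← hWsup, List.map_tail]
      refine List.Nodup.of_map Subtype.val ?_
      rw [htl]
      exact hc.support_nodup


end IneqTreeAux

/-- **Lemma 18.** Let `T₁, T₂` be two intersecting labelled copies in `K_n` of a tree `T`
on at least two vertices with `ρ(T) = ρ`. With `k'` and `ℓ'` the numbers of vertices and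
edges of `T₁ ∩ T₂`, and `ρ̂ = ρ(T₁ ∪ T₂)`, we have `k' - ℓ' - 2 + ρ̂/ρ ≥ 0`. -/
theorem ineq_tree {α : Type} [Fintype α] (T : SimpleGraph α) (hT : T.IsTree)
    (hcard : 2 ≤ Fintype.card α) (ρ : ℕ) (hρ : ρ = trailDecompNumber T)
    (n : ℕ) (φ₁ φ₂ : α ↪ Fin n)
    (hint : (Set.range ⇑φ₁ ∩ Set.range ⇑φ₂).Nonempty)
    (k' ℓ' ρh : ℕ)
    (hk' : k' = (Set.range ⇑φ₁ ∩ Set.range ⇑φ₂).ncard)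
    (hℓ' : ℓ' = ((T.map φ₁).edgeSet ∩ (T.map φ₂).edgeSet).ncard)
    (hρh : ρh = trailDecompNumber (T.map φ₁ ⊔ T.map φ₂)) :
    (0 : ℚ) ≤ (k' : ℚ) - (ℓ' : ℚ) - 2 + (ρh : ℚ) / (ρ : ℚ) := by
  classical
  obtain ⟨hle, hac⟩ := IneqTreeAux.main_counting T hT hcard φ₁ φ₂ hint
  have hTd : trailDecompNumber T = sInf (IneqTreeAux.decompSet T) := rfl
  have hUd : trailDecompNumber (T.map φ₁ ⊔ T.map φ₂)
      = sInf (IneqTreeAux.decompSet (T.map φ₁ ⊔ T.map φ₂)) := rfl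
  rw [← hk', ← hℓ'] at hle hac
  rcases Nat.lt_or_ge k' (ℓ' + 2) with hcase | hcase
  · -- hard case : k' = ℓ' + 1
    have hk : k' = ℓ' + 1 := by omega
    have hacU : (T.map φ₁ ⊔ T.map φ₂).IsAcyclic := hac hk
    have hne : Nonempty α := Fintype.card_pos_iff.mp (by omega)
    have hTc : T.Connected := hT.isConnected
    have hsupA : (T.map φ₁).support = Set.range ⇑φ₁ :=
      IneqTreeAux.support_map_eq hTc hcard φ₁
    have hconnA : ∀ a b, a ∈ (T.map φ₁).support → b ∈ (T.map φ₁).support →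
        (T.map φ₁).Reachable a b := by
      rw [hsupA]
      rintro a b ⟨a', rfl⟩ ⟨b', rfl⟩
      exact IneqTreeAux.reach_map hTc φ₁ a' b'
    have hmono : sInf (IneqTreeAux.decompSet T)
        ≤ sInf (IneqTreeAux.decompSet (T.map φ₁ ⊔ T.map φ₂)) :=
      IneqTreeAux.tdn_mono hacU le_sup_left hconnA (Classical.arbitrary α)
    have hTedge : T.edgeSet.Nonempty := by
      obtain ⟨b, hb⟩ := IneqTreeAux.exists_adj_of_connected hTc hcard (Classical.arbitrary α)
      exact ⟨s(Classical.arbitrary α, b), hb⟩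
    have hρ1 : 1 ≤ ρ := by
      rw [hρ, hTd]
      exact IneqTreeAux.one_le_sInf_decompSet T hTedge
    have hρρh : ρ ≤ ρh := by
      rw [hρ, hρh, hTd, hUd]
      exact hmono
    have hdiv : (1 : ℚ) ≤ (ρh : ℚ) / (ρ : ℚ) := by
      rw [one_le_div (by exact_mod_cast hρ1 : (0:ℚ) < (ρ:ℚ))]
      exact_mod_cast hρρh
    have hkq : (k' : ℚ) = (ℓ' : ℚ) + 1 := by exact_mod_cast hk
    linarith
  · -- easy case : k' ≥ ℓ' + 2
    have h1 : (0 : ℚ) ≤ (ρh : ℚ) / (ρ : ℚ) :=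
      div_nonneg (by positivity) (by positivity)
    have h2 : (ℓ' : ℚ) + 2 ≤ (k' : ℚ) := by exact_mod_cast hcase
    linarith
end
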